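/- arXiv:1303.0615 — 3 statements merged into one kernel-verified Lean document; each statement's English description precedes it below -/
import Mathlib

section
/- (Theorem 1) In the RIFS interpolation setup with matching conditions, there exists a unique continuous function f : I → R such that f(x_i) = y_i for i = 0, 1, …, n and, for every i = 1, …, n (with k = γ(i)) and every x ∈ I_i, f(x) = s_{i,k}(x) a(f(L_{i,k}^{−1}(x))) + b_{i,k}(L_{i,k}^{−1}(x)). Consequently the graph Gr(f) of f satisfies the invariance relation Gr(f) ∩ (I_i × R) = W_{i,k}({(x, f(x)) : x ∈ Ĩ_k}) for each i, where W_{i,k}(x,y) = (L_{i,k}(x), F_{i,k}(x,y)); i.e., Gr(f) is the attractor of the recurrent iterated function system {I × H; M; W_{1,γ(1)}, …, W_{n,γ(n)}} and interpolates the data set P. -/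
/-!
On the region `I_i` the Read–Bajraktarević operator sends `g` to
`s_i · a ∘ g ∘ L_i⁻¹ + b_i ∘ L_i⁻¹`. On continuous functions interpolating the data it is well
defined and continuous, because the matching conditions make neighbouring pieces agree at the
shared knot, and it is a contraction for the sup norm with constant `max_i sup |s_i| · L_a < 1`.
Its fixed point in the complete space of continuous interpolants is `f`, and the functional
equation of `f` is exactly the invariance `Gr f ∩ (I_i × ℝ) = W_i (Gr f|Ĩ_k)`.
-/

open Set

theorem IsCompact.continuousOn_of_invOn {X Y : Type*} [TopologicalSpace X] [TopologicalSpace Y]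
    [T2Space Y] {f : X → Y} {g : Y → X} {A : Set X} {B : Set Y} (hA : IsCompact A)
    (hf : ContinuousOn f A) (hg : MapsTo g B A) (hinv : InvOn g f A B) : ContinuousOn g B := by
  refine continuousOn_iff_isClosed.2 fun C hC => ⟨f '' (C ∩ A), ?_, ?_⟩
  · exact ((hA.inter_left hC).image_of_continuousOn (hf.mono inter_subset_right)).isClosed
  · ext t
    constructor
    · rintro ⟨htC, htB⟩
      exact ⟨⟨g t, ⟨htC, hg htB⟩, hinv.2 htB⟩, htB⟩
    · rintro ⟨⟨u, ⟨huC, huA⟩, rfl⟩, htB⟩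
      exact ⟨by rwa [mem_preimage, hinv.1 huA], htB⟩

theorem continuousOn_of_abs_sub_le {f : ℝ → ℝ} {S : Set ℝ} {c : ℝ}
    (h : ∀ u ∈ S, ∀ v ∈ S, |f u - f v| ≤ c * |u - v|) : ContinuousOn f S :=
  (LipschitzOnWith.of_dist_le' (K := c) fun u hu v hv => by
    simpa only [Real.dist_eq] using h u hu v hv).continuousOn

theorem isClosed_setOf_IccExtend_eq {ι : Type*} {a b : ℝ} (hab : a ≤ b) (J : Set ι)
    (p y : ι → ℝ) : IsClosed {G : C(Icc a b, ℝ) | ∀ j ∈ J, IccExtend hab G (p j) = y j} := by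
  simp only [ofPred_forall]
  exact isClosed_biInter fun j _ => isClosed_eq (continuous_eval_const _) continuous_const

theorem eqOn_of_contraction {I : Set ℝ} {c : ℝ} {T : (ℝ → ℝ) → ℝ → ℝ}
    (hT : ∀ g h D, (∀ u ∈ I, |g u - h u| ≤ D) → ∀ t ∈ I, |T g t - T h t| ≤ c * D)
    {g h : ℝ → ℝ} (hgh : EqOn g h I) : EqOn (T g) (T h) I := fun t ht => by
  have := hT g h 0 (fun u hu => by simp [hgh hu]) t ht
  rwa [mul_zero, abs_nonpos_iff, sub_eq_zero] at this

theorem exists_unique_fixedPoint_of_contraction {ι : Type*} {a b c : ℝ} (hab : a ≤ b)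
    (hc : c < 1) {J : Set ι} {p y : ι → ℝ} (hp : ∀ j ∈ J, p j ∈ Icc a b)
    {T : (ℝ → ℝ) → ℝ → ℝ} (hne : ∃ g, ContinuousOn g (Icc a b) ∧ ∀ j ∈ J, g (p j) = y j)
    (hT : ∀ g, ContinuousOn g (Icc a b) → (∀ j ∈ J, g (p j) = y j) →
      ContinuousOn (T g) (Icc a b) ∧ ∀ j ∈ J, T g (p j) = y j)
    (hcontr : ∀ g h D, (∀ u ∈ Icc a b, |g u - h u| ≤ D) →
      ∀ t ∈ Icc a b, |T g t - T h t| ≤ c * D) :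
    ∃ f, (ContinuousOn f (Icc a b) ∧ ∀ j ∈ J, f (p j) = y j) ∧ EqOn (T f) f (Icc a b) ∧
      ∀ g, ContinuousOn g (Icc a b) → (∀ j ∈ J, g (p j) = y j) → EqOn (T g) g (Icc a b) →
        EqOn g f (Icc a b) := by
  set S := {G : C(Icc a b, ℝ) | ∀ j ∈ J, IccExtend hab G (p j) = y j}
  have restrict_mem : ∀ g (hg : ContinuousOn g (Icc a b)), (∀ j ∈ J, g (p j) = y j) →
      (⟨_, hg.domRestrict⟩ : C(Icc a b, ℝ)) ∈ S := fun g _ hgy j hj => by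
    rw [IccExtend_of_mem _ _ (hp j hj)]; exact hgy j hj
  have extend_mem : ∀ G ∈ S, ContinuousOn (IccExtend hab G) (Icc a b) ∧
      ∀ j ∈ J, IccExtend hab G (p j) = y j := fun G hG =>
    ⟨G.continuous.Icc_extend'.continuousOn, hG⟩
  have hTS : ∀ G : S, ContinuousOn (T (IccExtend hab G)) (Icc a b) ∧
      ∀ j ∈ J, T (IccExtend hab G) (p j) = y j := fun G =>
    hT _ (extend_mem G G.2).1 (extend_mem G G.2).2
  let Φ : S → S := fun G => ⟨_, restrict_mem _ (hTS G).1 (hTS G).2⟩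
  have hΦ : ContractingWith c.toNNReal Φ := by
    refine ⟨Real.toNNReal_lt_one.2 hc, LipschitzWith.of_dist_le_mul fun G H => ?_⟩
    refine (ContinuousMap.dist_le (by positivity)).2 fun t => ?_
    refine (hcontr _ _ (dist G H) (fun u hu => ?_) t t.2).trans ?_
    · simpa only [IccExtend_of_mem _ _ hu, ← Real.dist_eq, Subtype.dist_eq] using
        ContinuousMap.dist_apply_le_dist (f := G.1) (g := H.1) ⟨u, hu⟩
    · exact mul_le_mul_of_nonneg_right (Real.le_coe_toNNReal c) dist_nonneg
  obtain ⟨g₀, hg₀c, hg₀y⟩ := hne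
  have : Nonempty S := ⟨⟨⟨_, hg₀c.domRestrict⟩, restrict_mem g₀ hg₀c hg₀y⟩⟩
  have : CompleteSpace S := (isClosed_setOf_IccExtend_eq hab J p y).completeSpace_coe
  obtain ⟨f₀, hf₀⟩ : ∃ f₀, Function.IsFixedPt Φ f₀ := ⟨_, hΦ.fixedPoint_isFixedPt⟩
  refine ⟨IccExtend hab f₀.1, extend_mem _ f₀.2, fun t ht => ?_, fun g hgc hgy hg t ht => ?_⟩
  · rw [IccExtend_of_mem _ _ ht]
    conv_rhs => rw [← hf₀]
    rfl
  · have hfix : Function.IsFixedPt Φ ⟨_, restrict_mem g hgc hgy⟩ := by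
      refine Subtype.ext (ContinuousMap.ext fun u => ?_)
      refine (eqOn_of_contraction hcontr (fun v hv => ?_) u.2).trans (hg u.2)
      exact IccExtend_of_mem _ _ hv
    rw [IccExtend_of_mem _ _ ht, ← hΦ.fixedPoint_unique' hfix hf₀]
    rfl

section Partition

variable {n : ℕ} {x : ℕ → ℝ}

theorem Icc_subset_Icc_of_monotoneOn (hx : MonotoneOn x (Iic n)) {i j : ℕ} (hij : i ≤ j)
    (hj : j ≤ n) : Icc (x i) (x j) ⊆ Icc (x 0) (x n) :=
  Icc_subset_Icc (hx (mem_Iic.2 (Nat.zero_le _)) (mem_Iic.2 (hij.trans hj)) (Nat.zero_le _))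
    (hx (mem_Iic.2 hj) (mem_Iic.2 le_rfl) hj)

theorem mem_Icc_of_monotoneOn (hx : MonotoneOn x (Iic n)) {j : ℕ} (hj : j ≤ n) :
    x j ∈ Icc (x 0) (x n) :=
  Icc_subset_Icc_of_monotoneOn hx le_rfl hj (left_mem_Icc.2 le_rfl)

theorem continuousOn_Icc_of_forall_region (hx : MonotoneOn x (Iic n)) {f : ℝ → ℝ}
    (hf : ∀ i, 1 ≤ i → i ≤ n → ContinuousOn f (Icc (x (i - 1)) (x i))) :
    ContinuousOn f (Icc (x 0) (x n)) := by
  suffices ∀ m ≤ n, ContinuousOn f (Icc (x 0) (x m)) from this n le_rfl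
  intro m hm
  induction m with
  | zero => simp [continuousOn_singleton]
  | succ m ih =>
    have hmono : ∀ {i j}, i ≤ j → j ≤ m + 1 → x i ≤ x j := fun hij hj =>
      hx (mem_Iic.2 (by omega)) (mem_Iic.2 (by omega)) hij
    rw [← Icc_union_Icc_eq_Icc (hmono (Nat.zero_le m) (by omega)) (hmono m.le_succ le_rfl)]
    exact (ih (by omega)).union_of_isClosed (by simpa using hf (m + 1) (by omega) hm)
      isClosed_Icc isClosed_Icc

theorem eq_add_one_of_mem_Icc_of_mem_Icc (hx : StrictMonoOn x (Iic n)) {i j : ℕ} (hij : i < j)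
    (hj : j ≤ n) {t : ℝ} (hti : t ∈ Icc (x (i - 1)) (x i)) (htj : t ∈ Icc (x (j - 1)) (x j)) :
    j = i + 1 ∧ t = x i := by
  have : j - 1 ≤ i :=
    (hx.le_iff_le (mem_Iic.2 (by omega)) (mem_Iic.2 (by omega))).1 (htj.1.trans hti.2)
  obtain rfl : j = i + 1 := by omega
  exact ⟨rfl, le_antisymm hti.2 (by simpa using htj.1)⟩

noncomputable def regionIndex (n : ℕ) (x : ℕ → ℝ) (t : ℝ) : ℕ :=
  Nat.findGreatest (fun j => x (j - 1) ≤ t) n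

theorem regionIndex_spec (hn : 0 < n) {t : ℝ} (ht : t ∈ Icc (x 0) (x n)) :
    1 ≤ regionIndex n x t ∧ regionIndex n x t ≤ n ∧
      t ∈ Icc (x (regionIndex n x t - 1)) (x (regionIndex n x t)) := by
  let P j := x (j - 1) ≤ t
  have h1 : P 1 := ht.1
  refine ⟨Nat.le_findGreatest hn h1, Nat.findGreatest_le n, Nat.findGreatest_spec hn h1, ?_⟩
  show t ≤ x (Nat.findGreatest P n)
  rcases (Nat.findGreatest_le (P := P) n).lt_or_eq with hlt | heq
  · have := Nat.findGreatest_is_greatest (Nat.lt_succ_self _) hlt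
    simp only [P, not_le] at this
    exact this.le
  · rw [heq]
    exact ht.2

noncomputable def glueRegions (n : ℕ) (x : ℕ → ℝ) (φ : ℕ → ℝ → ℝ) (t : ℝ) : ℝ :=
  φ (regionIndex n x t) t

variable {φ : ℕ → ℝ → ℝ}

theorem glueRegions_eq (hx : StrictMonoOn x (Iic n))
    (hφ : ∀ i, 1 ≤ i → i < n → φ i (x i) = φ (i + 1) (x i)) {i : ℕ} (h1 : 1 ≤ i) (h2 : i ≤ n)
    {t : ℝ} (ht : t ∈ Icc (x (i - 1)) (x i)) : glueRegions n x φ t = φ i t := by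
  obtain ⟨j1, j2, hj⟩ :=
    regionIndex_spec (by omega) (Icc_subset_Icc_of_monotoneOn hx.monotoneOn (Nat.sub_le i 1) h2 ht)
  show φ (regionIndex n x t) t = φ i t
  generalize regionIndex n x t = j at j1 j2 hj
  rcases lt_trichotomy j i with hji | rfl | hij
  · obtain ⟨rfl, rfl⟩ := eq_add_one_of_mem_Icc_of_mem_Icc hx hji h2 hj ht
    exact hφ j j1 (by omega)
  · rfl
  · obtain ⟨rfl, rfl⟩ := eq_add_one_of_mem_Icc_of_mem_Icc hx hij j2 ht hj
    exact (hφ i h1 (by omega)).symm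

theorem continuousOn_glueRegions (hx : StrictMonoOn x (Iic n))
    (hφ : ∀ i, 1 ≤ i → i < n → φ i (x i) = φ (i + 1) (x i))
    (hcont : ∀ i, 1 ≤ i → i ≤ n → ContinuousOn (φ i) (Icc (x (i - 1)) (x i))) :
    ContinuousOn (glueRegions n x φ) (Icc (x 0) (x n)) :=
  continuousOn_Icc_of_forall_region hx.monotoneOn fun i h1 h2 =>
    (hcont i h1 h2).congr fun _ ht => glueRegions_eq hx hφ h1 h2 ht

theorem eqOn_glueRegions (hn : 0 < n) {f : ℝ → ℝ}
    (h : ∀ i, 1 ≤ i → i ≤ n → EqOn (φ i) f (Icc (x (i - 1)) (x i))) :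
    EqOn (glueRegions n x φ) f (Icc (x 0) (x n)) := fun _ ht =>
  let ⟨h1, h2, hti⟩ := regionIndex_spec hn ht
  h _ h1 h2 hti

end Partition

theorem exists_continuous_interpolant {n : ℕ} {x : ℕ → ℝ} (hx : InjOn x (Iic n)) (y : ℕ → ℝ) :
    ∃ g : ℝ → ℝ, Continuous g ∧ ∀ j ≤ n, g (x j) = y j :=
  ⟨fun t => (Lagrange.interpolate (Finset.Iic n) x y).eval t, Polynomial.continuous _,
    fun _ hj => Lagrange.eval_interpolate_at_node y (by rwa [Finset.coe_Iic]) (Finset.mem_Iic.2 hj)⟩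

theorem graph_inter_eq_image {I A B : Set ℝ} {f L Linv : ℝ → ℝ} {F : ℝ → ℝ → ℝ} (hBI : B ⊆ I)
    (hL : MapsTo L A B) (hLinv : MapsTo Linv B A) (hinv : InvOn Linv L A B)
    (hf : ∀ t ∈ B, f t = F (Linv t) (f (Linv t))) :
    {p : ℝ × ℝ | p.1 ∈ I ∧ p.2 = f p.1} ∩ (B ×ˢ univ) =
      (fun p : ℝ × ℝ => (L p.1, F p.1 p.2)) '' {p : ℝ × ℝ | p.1 ∈ A ∧ p.2 = f p.1} := by
  ext ⟨t, v⟩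
  simp only [mem_inter_iff, mem_ofPred_eq, mem_prod, mem_univ, and_true, mem_image,
    Prod.mk.injEq, Prod.exists]
  constructor
  · rintro ⟨⟨-, rfl⟩, ht⟩
    exact ⟨Linv t, _, ⟨hLinv ht, rfl⟩, hinv.2 ht, (hf t ht).symm⟩
  · rintro ⟨u, _, ⟨hu, rfl⟩, rfl, rfl⟩
    refine ⟨⟨hBI (hL hu), ?_⟩, hL hu⟩
    rw [hf _ (hL hu), hinv.1 hu]

/-- The domain assigned to the region `[x (i - 1), x i]` is `[x (p i), x (q i)]`; in the paper
`p = s ∘ γ` and `q = e ∘ γ`. -/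
structure IsRIFSInterpolation (n : ℕ) (x y : ℕ → ℝ) (p q : ℕ → ℕ) (L Linv b sfun : ℕ → ℝ → ℝ)
    (a : ℝ → ℝ) (La : ℝ) : Prop where
  pos : 0 < n
  strictMonoOn : StrictMonoOn x (Iic n)
  domain_le : ∀ i, 1 ≤ i → i ≤ n → p i ≤ q i ∧ q i ≤ n
  image_L_endpoints : ∀ i, 1 ≤ i → i ≤ n → L i '' {x (p i), x (q i)} = {x (i - 1), x i}
  continuousOn_L : ∀ i, 1 ≤ i → i ≤ n → ContinuousOn (L i) (Icc (x (p i)) (x (q i)))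
  inverse : ∀ i, 1 ≤ i → i ≤ n →
    MapsTo (Linv i) (Icc (x (i - 1)) (x i)) (Icc (x (p i)) (x (q i))) ∧
      (∀ t ∈ Icc (x (i - 1)) (x i), L i (Linv i t) = t) ∧
      (∀ u ∈ Icc (x (p i)) (x (q i)), Linv i (L i u) = u)
  La_nonneg : 0 ≤ La
  lipschitz_a : ∀ u v : ℝ, |a u - a v| ≤ La * |u - v|
  continuousOn_b : ∀ i, 1 ≤ i → i ≤ n → ContinuousOn (b i) (Icc (x (p i)) (x (q i)))
  continuousOn_s : ∀ i, 1 ≤ i → i ≤ n → ContinuousOn (sfun i) (Icc (x (i - 1)) (x i))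
  bound_s : ∀ i, 1 ≤ i → i ≤ n →
    ∃ sb : ℝ, (∀ u ∈ Icc (x (i - 1)) (x i), |sfun i u| ≤ sb) ∧ sb * La < 1
  matching : ∀ i, 1 ≤ i → i ≤ n → ∀ α ∈ ({p i, q i} : Set ℕ), ∀ β ∈ ({i - 1, i} : Set ℕ),
    L i (x α) = x β → sfun i (x β) * a (y α) + b i (x α) = y β

noncomputable def rbOperator (n : ℕ) (x : ℕ → ℝ) (Linv b sfun : ℕ → ℝ → ℝ) (a g : ℝ → ℝ) :
    ℝ → ℝ :=
  glueRegions n x fun i t => sfun i t * a (g (Linv i t)) + b i (Linv i t)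

namespace IsRIFSInterpolation

variable {n : ℕ} {x y : ℕ → ℝ} {p q : ℕ → ℕ} {L Linv b sfun : ℕ → ℝ → ℝ} {a g : ℝ → ℝ} {La : ℝ}

theorem region_subset (hR : IsRIFSInterpolation n x y p q L Linv b sfun a La)
    {i : ℕ} (h2 : i ≤ n) : Icc (x (i - 1)) (x i) ⊆ Icc (x 0) (x n) :=
  Icc_subset_Icc_of_monotoneOn hR.strictMonoOn.monotoneOn (Nat.sub_le i 1) h2

theorem mapsTo_Linv (hR : IsRIFSInterpolation n x y p q L Linv b sfun a La)
    {i : ℕ} (h1 : 1 ≤ i) (h2 : i ≤ n) :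
    MapsTo (Linv i) (Icc (x (i - 1)) (x i)) (Icc (x 0) (x n)) :=
  (hR.inverse i h1 h2).1.mono_right <|
    Icc_subset_Icc_of_monotoneOn hR.strictMonoOn.monotoneOn (hR.domain_le i h1 h2).1
      (hR.domain_le i h1 h2).2

theorem piece_endpoint (hR : IsRIFSInterpolation n x y p q L Linv b sfun a La)
    (hg : ∀ j ≤ n, g (x j) = y j) {i β : ℕ} (h1 : 1 ≤ i) (h2 : i ≤ n)
    (hβ : β ∈ ({i - 1, i} : Set ℕ)) :
    sfun i (x β) * a (g (Linv i (x β))) + b i (Linv i (x β)) = y β := by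
  obtain ⟨hpq, hq⟩ := hR.domain_le i h1 h2
  have hxβ : x β ∈ L i '' {x (p i), x (q i)} := by
    rw [hR.image_L_endpoints i h1 h2]
    rcases hβ with rfl | rfl <;> simp
  obtain ⟨w, hw, hLw⟩ := hxβ
  obtain ⟨α, hα, rfl⟩ : ∃ α ∈ ({p i, q i} : Set ℕ), w = x α := by
    rcases hw with rfl | rfl <;> simp
  have hαn : α ≤ n := by rcases hα with rfl | rfl <;> omega
  have hxα : x α ∈ Icc (x (p i)) (x (q i)) := by
    have := hR.strictMonoOn.monotoneOn (mem_Iic.2 (hpq.trans hq)) (mem_Iic.2 hq) hpq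
    rcases hα with rfl | rfl <;> simp [this]
  have hLinv : Linv i (x β) = x α := by rw [← hLw, (hR.inverse i h1 h2).2.2 _ hxα]
  rw [hLinv, hg α hαn]
  exact hR.matching i h1 h2 α hα β hβ hLw

theorem piece_eq_succ_piece (hR : IsRIFSInterpolation n x y p q L Linv b sfun a La)
    (hg : ∀ j ≤ n, g (x j) = y j) {i : ℕ} (h1 : 1 ≤ i) (h2 : i < n) :
    sfun i (x i) * a (g (Linv i (x i))) + b i (Linv i (x i)) =
      sfun (i + 1) (x i) * a (g (Linv (i + 1) (x i))) + b (i + 1) (Linv (i + 1) (x i)) := by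
  rw [hR.piece_endpoint hg h1 h2.le (by simp), hR.piece_endpoint hg (by omega) h2 (by simp)]

theorem rbOperator_eq (hR : IsRIFSInterpolation n x y p q L Linv b sfun a La)
    (hg : ∀ j ≤ n, g (x j) = y j) {i : ℕ} (h1 : 1 ≤ i) (h2 : i ≤ n) {t : ℝ}
    (ht : t ∈ Icc (x (i - 1)) (x i)) :
    rbOperator n x Linv b sfun a g t = sfun i t * a (g (Linv i t)) + b i (Linv i t) :=
  glueRegions_eq hR.strictMonoOn (fun _ => hR.piece_eq_succ_piece hg) h1 h2 ht

theorem rbOperator_knot (hR : IsRIFSInterpolation n x y p q L Linv b sfun a La)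
    (hg : ∀ j ≤ n, g (x j) = y j) {j : ℕ} (hj : j ≤ n) :
    rbOperator n x Linv b sfun a g (x j) = y j := by
  obtain ⟨i, h1, h2, hβ⟩ : ∃ i, 1 ≤ i ∧ i ≤ n ∧ (j = i - 1 ∨ j = i) := by
    rcases j with _ | j
    · exact ⟨1, le_rfl, hR.pos, Or.inl rfl⟩
    · exact ⟨j + 1, by omega, hj, Or.inr rfl⟩
  have hxj : x j ∈ Icc (x (i - 1)) (x i) := by
    have := hR.strictMonoOn.monotoneOn (mem_Iic.2 (Nat.sub_le i 1 |>.trans h2)) (mem_Iic.2 h2)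
      (Nat.sub_le i 1)
    rcases hβ with rfl | rfl <;> simp [this]
  rw [hR.rbOperator_eq hg h1 h2 hxj, hR.piece_endpoint hg h1 h2 hβ]

theorem continuousOn_rbOperator (hR : IsRIFSInterpolation n x y p q L Linv b sfun a La)
    (hgc : ContinuousOn g (Icc (x 0) (x n)))
    (hg : ∀ j ≤ n, g (x j) = y j) :
    ContinuousOn (rbOperator n x Linv b sfun a g) (Icc (x 0) (x n)) := by
  refine continuousOn_glueRegions hR.strictMonoOn (fun _ => hR.piece_eq_succ_piece hg)
    fun i h1 h2 => ?_
  obtain ⟨hmaps, hright, hleft⟩ := hR.inverse i h1 h2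
  have hLinv : ContinuousOn (Linv i) (Icc (x (i - 1)) (x i)) :=
    isCompact_Icc.continuousOn_of_invOn (hR.continuousOn_L i h1 h2) hmaps ⟨hleft, hright⟩
  have ha : Continuous a :=
    continuousOn_univ.1 (continuousOn_of_abs_sub_le fun u _ v _ => hR.lipschitz_a u v)
  exact (hR.continuousOn_s i h1 h2).mul
      (ha.comp_continuousOn (hgc.comp hLinv (hR.mapsTo_Linv h1 h2))) |>.add
    ((hR.continuousOn_b i h1 h2).comp hLinv hmaps)

theorem exists_rbOperator_contraction
    (hR : IsRIFSInterpolation n x y p q L Linv b sfun a La) : ∃ c < 1, ∀ g h : ℝ → ℝ, ∀ D : ℝ,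
    (∀ u ∈ Icc (x 0) (x n), |g u - h u| ≤ D) → ∀ t ∈ Icc (x 0) (x n),
      |rbOperator n x Linv b sfun a g t - rbOperator n x Linv b sfun a h t| ≤ c * D := by
  choose! sb hsb hsbLa using hR.bound_s
  have hne : (Finset.Icc 1 n).Nonempty := ⟨1, Finset.mem_Icc.2 ⟨le_rfl, hR.pos⟩⟩
  set c := (Finset.Icc 1 n).sup' hne fun i => sb i * La
  refine ⟨c, (Finset.sup'_lt_iff hne).2 fun i hi => ?_, fun g h D hD t ht => ?_⟩
  · exact hsbLa i (Finset.mem_Icc.1 hi).1 (Finset.mem_Icc.1 hi).2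
  obtain ⟨h1, h2, hti⟩ := regionIndex_spec hR.pos ht
  simp only [rbOperator, glueRegions]
  generalize regionIndex n x t = i at h1 h2 hti ⊢
  have hu := hD _ (hR.mapsTo_Linv h1 h2 hti)
  have hc : sb i * La ≤ c := Finset.le_sup' (fun i => sb i * La) (Finset.mem_Icc.2 ⟨h1, h2⟩)
  have hLa := hR.La_nonneg
  calc _ = |sfun i t| * |a (g (Linv i t)) - a (h (Linv i t))| := by rw [← abs_mul]; ring_nf
    _ ≤ sb i * (La * D) := by
        gcongr ?_ * ?_
        · exact (abs_nonneg _).trans (hsb i h1 h2 t hti)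
        · exact hsb i h1 h2 t hti
        · exact (hR.lipschitz_a _ _).trans (by gcongr)
    _ ≤ c * D := by rw [← mul_assoc]; gcongr; exact (abs_nonneg _).trans hu

end IsRIFSInterpolation

theorem stmt2_general
    -- the data set P: x 0 < x 1 < … < x n, points (x i, y i)
    (n l : ℕ) (hn : 0 < n)
    (x y : ℕ → ℝ) (hx : ∀ i < n, x i < x (i + 1))
    -- domains Ĩ_k = [x (s k), x (e k)], with e k − s k ≥ 2
    (s e : ℕ → ℕ)
    (hse : ∀ k, 1 ≤ k → k ≤ l → s k + 2 ≤ e k ∧ e k ≤ n)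
    -- each region I_i is related to the domain Ĩ_(γ i)
    (γ : ℕ → ℕ) (hγ : ∀ i, 1 ≤ i → i ≤ n → 1 ≤ γ i ∧ γ i ≤ l)
    (L Linv b sfun : ℕ → ℝ → ℝ) (a : ℝ → ℝ)
    -- L i : Ĩ_(γ i) → I_i is a contraction homeomorphism mapping endpoints onto endpoints,
    -- with inverse Linv i
    (hLmap : ∀ i, 1 ≤ i → i ≤ n →
      MapsTo (L i) (Icc (x (s (γ i))) (x (e (γ i)))) (Icc (x (i - 1)) (x i)))
    (hLend : ∀ i, 1 ≤ i → i ≤ n →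
      (L i) '' {x (s (γ i)), x (e (γ i))} = {x (i - 1), x i})
    (hLcon : ∀ i, 1 ≤ i → i ≤ n → ∃ c : ℝ, 0 ≤ c ∧ c < 1 ∧
      ∀ u ∈ Icc (x (s (γ i))) (x (e (γ i))),
      ∀ v ∈ Icc (x (s (γ i))) (x (e (γ i))), |L i u - L i v| ≤ c * |u - v|)
    (hLinv : ∀ i, 1 ≤ i → i ≤ n →
      (MapsTo (Linv i) (Icc (x (i - 1)) (x i)) (Icc (x (s (γ i))) (x (e (γ i)))) ∧
       (∀ t ∈ Icc (x (i - 1)) (x i), L i (Linv i t) = t) ∧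
       (∀ u ∈ Icc (x (s (γ i))) (x (e (γ i))), Linv i (L i u) = u)))
    -- a is Lipschitz with constant La, fixing the interpolation values over domain endpoints
    (La : ℝ) (hLa0 : 0 ≤ La)
    (ha : ∀ u v : ℝ, |a u - a v| ≤ La * |u - v|)
    -- b i is Lipschitz on Ĩ_(γ i)
    (hb : ∀ i, 1 ≤ i → i ≤ n → ∃ K : ℝ, 0 ≤ K ∧
      ∀ u ∈ Icc (x (s (γ i))) (x (e (γ i))),
      ∀ v ∈ Icc (x (s (γ i))) (x (e (γ i))), |b i u - b i v| ≤ K * |u - v|)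
    -- sfun i is a contraction on I_i with sup_{I_i} |sfun i| · La < 1
    (hscon : ∀ i, 1 ≤ i → i ≤ n → ∃ c : ℝ, 0 ≤ c ∧ c < 1 ∧
      ∀ u ∈ Icc (x (i - 1)) (x i), ∀ v ∈ Icc (x (i - 1)) (x i),
        |sfun i u - sfun i v| ≤ c * |u - v|)
    (hsLa : ∀ i, 1 ≤ i → i ≤ n → ∃ sb : ℝ,
      (∀ u ∈ Icc (x (i - 1)) (x i), |sfun i u| ≤ sb) ∧ sb * La < 1)
    -- matching conditions: F_{i,k}(x_α, y_α) = y_β whenever L_{i,k}(x_α) = x_β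
    (hmatch : ∀ i, 1 ≤ i → i ≤ n → ∀ α ∈ ({s (γ i), e (γ i)} : Set ℕ),
      ∀ β ∈ ({i - 1, i} : Set ℕ), L i (x α) = x β →
        sfun i (x β) * a (y α) + b i (x α) = y β) :
    ∃ f : ℝ → ℝ,
      -- f is continuous, interpolates the data set P, and satisfies the self-affine equations
      (ContinuousOn f (Icc (x 0) (x n)) ∧ (∀ i ≤ n, f (x i) = y i) ∧
        ∀ i, 1 ≤ i → i ≤ n → ∀ t ∈ Icc (x (i - 1)) (x i),
          f t = sfun i t * a (f (Linv i t)) + b i (Linv i t)) ∧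
      -- f is the unique such function (on I)
      (∀ g : ℝ → ℝ,
        (ContinuousOn g (Icc (x 0) (x n)) ∧ (∀ i ≤ n, g (x i) = y i) ∧
          ∀ i, 1 ≤ i → i ≤ n → ∀ t ∈ Icc (x (i - 1)) (x i),
            g t = sfun i t * a (g (Linv i t)) + b i (Linv i t)) →
        ∀ t ∈ Icc (x 0) (x n), g t = f t) ∧
      -- the graph of f is invariant: Gr(f) ∩ (I_i × ℝ) = W_{i,k}(Gr(f|Ĩ_k))
      (∀ i, 1 ≤ i → i ≤ n →
        {p : ℝ × ℝ | p.1 ∈ Icc (x 0) (x n) ∧ p.2 = f p.1} ∩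
            (Icc (x (i - 1)) (x i) ×ˢ (univ : Set ℝ)) =
          (fun p : ℝ × ℝ => (L i p.1, sfun i (L i p.1) * a p.2 + b i p.1)) ''
            {p : ℝ × ℝ | p.1 ∈ Icc (x (s (γ i))) (x (e (γ i))) ∧ p.2 = f p.1}) := by
  have hR : IsRIFSInterpolation n x y (fun i => s (γ i)) (fun i => e (γ i)) L Linv b sfun a La :=
    { pos := hn
      strictMonoOn := strictMonoOn_Iic_of_lt_succ fun m hm => by simpa using hx m hm
      domain_le := fun i h1 h2 => by have := hse _ (hγ i h1 h2).1 (hγ i h1 h2).2; omega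
      image_L_endpoints := hLend
      continuousOn_L := fun i h1 h2 =>
        let ⟨_, _, _, hc⟩ := hLcon i h1 h2; continuousOn_of_abs_sub_le hc
      inverse := hLinv
      La_nonneg := hLa0
      lipschitz_a := ha
      continuousOn_b := fun i h1 h2 => let ⟨_, _, hK⟩ := hb i h1 h2; continuousOn_of_abs_sub_le hK
      continuousOn_s := fun i h1 h2 =>
        let ⟨_, _, _, hc⟩ := hscon i h1 h2; continuousOn_of_abs_sub_le hc
      bound_s := hsLa
      matching := hmatch }
  have hxI : ∀ j ≤ n, x j ∈ Icc (x 0) (x n) := fun _ =>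
    mem_Icc_of_monotoneOn hR.strictMonoOn.monotoneOn
  obtain ⟨c, hc, hcontr⟩ := hR.exists_rbOperator_contraction
  obtain ⟨g₀, hg₀c, hg₀y⟩ := exists_continuous_interpolant hR.strictMonoOn.injOn y
  obtain ⟨f, ⟨hfc, hfy⟩, hfix, huniq⟩ := exists_unique_fixedPoint_of_contraction (J := Iic n)
    (hxI n le_rfl).1 hc hxI ⟨g₀, hg₀c.continuousOn, hg₀y⟩
    (fun g hgc hgy => ⟨hR.continuousOn_rbOperator hgc hgy, fun j => hR.rbOperator_knot hgy⟩) hcontr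
  have hself : ∀ i, 1 ≤ i → i ≤ n → ∀ t ∈ Icc (x (i - 1)) (x i),
      f t = sfun i t * a (f (Linv i t)) + b i (Linv i t) := fun i h1 h2 t ht => by
    rw [← hfix (hR.region_subset h2 ht), hR.rbOperator_eq hfy h1 h2 ht]
  refine ⟨f, ⟨hfc, hfy, hself⟩, fun g ⟨hgc, hgy, hg⟩ =>
    huniq g hgc hgy (eqOn_glueRegions hn fun i h1 h2 t ht => (hg i h1 h2 t ht).symm),
    fun i h1 h2 => ?_⟩
  obtain ⟨hmaps, hright, hleft⟩ := hLinv i h1 h2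
  refine graph_inter_eq_image (F := fun u v => sfun i (L i u) * a v + b i u)
    (hR.region_subset h2) (hLmap i h1 h2) hmaps ⟨hleft, hright⟩ fun t ht => ?_
  rw [hright t ht]
  exact hself i h1 h2 t ht

/-- **Theorem 1.** In the RIFS interpolation setup with matching conditions, there is a unique
continuous function `f : I → ℝ` interpolating the data and satisfying
`f(x) = s_{i,k}(x) a(f(L_{i,k}⁻¹(x))) + b_{i,k}(L_{i,k}⁻¹(x))` on each region `I_i`;
moreover its graph satisfies the RIFS invariance relation
`Gr(f) ∩ (I_i × ℝ) = W_{i,k}({(x, f(x)) : x ∈ Ĩ_k})`, i.e. `Gr(f)` is the attractor of the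
recurrent iterated function system and interpolates the data set `P`. -/
theorem stmt2
    -- the data set P: x 0 < x 1 < … < x n, points (x i, y i)
    (n l : ℕ) (hn : 0 < n) (hl : 0 < l)
    (x y : ℕ → ℝ) (hx : ∀ i < n, x i < x (i + 1))
    -- domains Ĩ_k = [x (s k), x (e k)], with e k − s k ≥ 2
    (s e : ℕ → ℕ)
    (hse : ∀ k, 1 ≤ k → k ≤ l → s k + 2 ≤ e k ∧ e k ≤ n)
    -- each region I_i is related to the domain Ĩ_(γ i)
    (γ : ℕ → ℕ) (hγ : ∀ i, 1 ≤ i → i ≤ n → 1 ≤ γ i ∧ γ i ≤ l)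
    -- H is a (sufficiently large) interval containing all the y i
    (H0 H1 : ℝ) (hH01 : H0 ≤ H1) (hH : ∀ i ≤ n, y i ∈ Icc H0 H1)
    (L Linv b sfun : ℕ → ℝ → ℝ) (a : ℝ → ℝ)
    -- L i : Ĩ_(γ i) → I_i is a contraction homeomorphism mapping endpoints onto endpoints,
    -- with inverse Linv i
    (hLmap : ∀ i, 1 ≤ i → i ≤ n →
      MapsTo (L i) (Icc (x (s (γ i))) (x (e (γ i)))) (Icc (x (i - 1)) (x i)))
    (hLend : ∀ i, 1 ≤ i → i ≤ n →
      (L i) '' {x (s (γ i)), x (e (γ i))} = {x (i - 1), x i})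
    (hLcon : ∀ i, 1 ≤ i → i ≤ n → ∃ c : ℝ, 0 ≤ c ∧ c < 1 ∧
      ∀ u ∈ Icc (x (s (γ i))) (x (e (γ i))),
      ∀ v ∈ Icc (x (s (γ i))) (x (e (γ i))), |L i u - L i v| ≤ c * |u - v|)
    (hLinv : ∀ i, 1 ≤ i → i ≤ n →
      (MapsTo (Linv i) (Icc (x (i - 1)) (x i)) (Icc (x (s (γ i))) (x (e (γ i)))) ∧
       (∀ t ∈ Icc (x (i - 1)) (x i), L i (Linv i t) = t) ∧
       (∀ u ∈ Icc (x (s (γ i))) (x (e (γ i))), Linv i (L i u) = u)))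
    -- a is Lipschitz with constant La, fixing the interpolation values over domain endpoints
    (La : ℝ) (hLa0 : 0 ≤ La)
    (ha : ∀ u v : ℝ, |a u - a v| ≤ La * |u - v|)
    (hafix : ∀ k, 1 ≤ k → k ≤ l → a (y (s k)) = y (s k) ∧ a (y (e k)) = y (e k))
    -- b i is Lipschitz on Ĩ_(γ i)
    (hb : ∀ i, 1 ≤ i → i ≤ n → ∃ K : ℝ, 0 ≤ K ∧
      ∀ u ∈ Icc (x (s (γ i))) (x (e (γ i))),
      ∀ v ∈ Icc (x (s (γ i))) (x (e (γ i))), |b i u - b i v| ≤ K * |u - v|)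
    -- sfun i is a contraction on I_i with sup_{I_i} |sfun i| · La < 1
    (hscon : ∀ i, 1 ≤ i → i ≤ n → ∃ c : ℝ, 0 ≤ c ∧ c < 1 ∧
      ∀ u ∈ Icc (x (i - 1)) (x i), ∀ v ∈ Icc (x (i - 1)) (x i),
        |sfun i u - sfun i v| ≤ c * |u - v|)
    (hsLa : ∀ i, 1 ≤ i → i ≤ n → ∃ sb : ℝ,
      (∀ u ∈ Icc (x (i - 1)) (x i), |sfun i u| ≤ sb) ∧ sb * La < 1)
    -- matching conditions: F_{i,k}(x_α, y_α) = y_β whenever L_{i,k}(x_α) = x_β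
    (hmatch : ∀ i, 1 ≤ i → i ≤ n → ∀ α ∈ ({s (γ i), e (γ i)} : Set ℕ),
      ∀ β ∈ ({i - 1, i} : Set ℕ), L i (x α) = x β →
        sfun i (x β) * a (y α) + b i (x α) = y β) :
    ∃ f : ℝ → ℝ,
      -- f is continuous, interpolates the data set P, and satisfies the self-affine equations
      (ContinuousOn f (Icc (x 0) (x n)) ∧ (∀ i ≤ n, f (x i) = y i) ∧
        ∀ i, 1 ≤ i → i ≤ n → ∀ t ∈ Icc (x (i - 1)) (x i),
          f t = sfun i t * a (f (Linv i t)) + b i (Linv i t)) ∧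
      -- f is the unique such function (on I)
      (∀ g : ℝ → ℝ,
        (ContinuousOn g (Icc (x 0) (x n)) ∧ (∀ i ≤ n, g (x i) = y i) ∧
          ∀ i, 1 ≤ i → i ≤ n → ∀ t ∈ Icc (x (i - 1)) (x i),
            g t = sfun i t * a (g (Linv i t)) + b i (Linv i t)) →
        ∀ t ∈ Icc (x 0) (x n), g t = f t) ∧
      -- the graph of f is invariant: Gr(f) ∩ (I_i × ℝ) = W_{i,k}(Gr(f|Ĩ_k))
      (∀ i, 1 ≤ i → i ≤ n →
        {p : ℝ × ℝ | p.1 ∈ Icc (x 0) (x n) ∧ p.2 = f p.1} ∩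
            (Icc (x (i - 1)) (x i) ×ˢ (univ : Set ℝ)) =
          (fun p : ℝ × ℝ => (L i p.1, sfun i (L i p.1) * a p.2 + b i p.1)) ''
            {p : ℝ × ℝ | p.1 ∈ Icc (x (s (γ i))) (x (e (γ i))) ∧ p.2 = f p.1}) :=
  stmt2_general n l hn x y hx s e hse γ hγ L Linv b sfun a hLmap hLend hLcon hLinv La hLa0 ha hb
    hscon hsLa hmatch
end

section
/- (Lemma 8) Let f : [0,1] → R be a continuous function whose graph has box-counting dimension dim_B Gr(f) (the defining limit exists), and let λ : [0,1] → R be a Lipschitz function with min_{x∈[0,1]} |λ(x)| > 0. Then the box-counting dimension of the graph of the product λf, defined by (λf)(x) = λ(x) f(x), exists and equals that of f: dim_B Gr(λf) = dim_B Gr(f). -/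
/-!
The map `(x, y) ↦ (x, λ(x) y)` carries `Gr(f)` onto `Gr(λf)`, with inverse
`(x, z) ↦ (x, λ(x)⁻¹ z)`. Since `f` is bounded and `λ` is Lipschitz and bounded away from `0`,
both maps are Lipschitz on these bounded graphs. An `L`-Lipschitz map sends the part of a set
lying in one `δ`-mesh square into at most `(2⌈L⌉ + 1)²` squares, so `N_δ(Gr(λf))` and
`N_δ(Gr(f))` agree up to a constant factor, which disappears from `log N_δ / (-log δ)` as `δ → 0`.
-/

open Set Filter Topology

/-- `N_δ(A)` for `A ⊆ ℝ²`: the number of `δ`-mesh squares that intersect `A`. -/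
noncomputable def meshCount2 (δ : ℝ) (A : Set (ℝ × ℝ)) : ℕ :=
  Set.ncard {k : ℤ × ℤ |
    (A ∩ (Set.Ico ((k.1 : ℝ) * δ) (((k.1 : ℝ) + 1) * δ) ×ˢ
          Set.Ico ((k.2 : ℝ) * δ) (((k.2 : ℝ) + 1) * δ))).Nonempty}

/-- `N_δ(A)` for `A ⊆ ℝ³`: the number of `δ`-mesh cubes that intersect `A`. -/
noncomputable def meshCount3 (δ : ℝ) (A : Set (ℝ × ℝ × ℝ)) : ℕ :=
  Set.ncard {k : ℤ × ℤ × ℤ |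
    (A ∩ (Set.Ico ((k.1 : ℝ) * δ) (((k.1 : ℝ) + 1) * δ) ×ˢ
          (Set.Ico ((k.2.1 : ℝ) * δ) (((k.2.1 : ℝ) + 1) * δ) ×ˢ
           Set.Ico ((k.2.2 : ℝ) * δ) (((k.2.2 : ℝ) + 1) * δ)))).Nonempty}

/-- `A ⊆ ℝ²` has box-counting dimension `D`: the defining limit exists and equals `D`. -/
def HasBoxDim2 (A : Set (ℝ × ℝ)) (D : ℝ) : Prop :=
  Tendsto (fun δ : ℝ => Real.log (meshCount2 δ A) / (-Real.log δ)) (𝓝[>] 0) (𝓝 D)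

/-- `A ⊆ ℝ³` has box-counting dimension `D`: the defining limit exists and equals `D`. -/
def HasBoxDim3 (A : Set (ℝ × ℝ × ℝ)) (D : ℝ) : Prop :=
  Tendsto (fun δ : ℝ => Real.log (meshCount3 δ A) / (-Real.log δ)) (𝓝[>] 0) (𝓝 D)

/-- The graph of `f` over `[0,1]`. -/
def Gr1 (f : ℝ → ℝ) : Set (ℝ × ℝ) := {p | p.1 ∈ Set.Icc (0:ℝ) 1 ∧ p.2 = f p.1}

/-- The graph of `F : [0,1]² → ℝ`. -/
def Gr2 (F : ℝ → ℝ → ℝ) : Set (ℝ × ℝ × ℝ) :=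
  {p | p.1 ∈ Set.Icc (0:ℝ) 1 ∧ p.2.1 ∈ Set.Icc (0:ℝ) 1 ∧ p.2.2 = F p.1 p.2.1}

open Bornology
open scoped NNReal

lemma abs_log_sub_log_le_of_le_mul {a b C : ℕ} (hba : b ≤ C * a) (hab : a ≤ C * b) :
    |Real.log b - Real.log a| ≤ Real.log C := by
  rcases Nat.eq_zero_or_pos a with rfl | ha
  · obtain rfl : b = 0 := by simpa using hba
    simpa using Real.log_natCast_nonneg C
  have hb : 0 < b := Nat.pos_of_ne_zero fun hb => by simp [hb] at hab; omega
  have hC : 0 < C := Nat.pos_of_ne_zero fun hC => by simp [hC] at hab; omega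
  have hlog {u v : ℕ} (hu : 0 < u) (hv : v ≤ C * u) : Real.log v ≤ Real.log C + Real.log u := by
    rcases Nat.eq_zero_or_pos v with rfl | hv'
    · simpa using add_nonneg (Real.log_natCast_nonneg C) (Real.log_natCast_nonneg u)
    rw [← Real.log_mul (by positivity) (by positivity)]
    exact Real.log_le_log (by positivity) (by exact_mod_cast hv)
  rw [abs_sub_le_iff]
  constructor <;> linarith [hlog ha hba, hlog hb hab]

lemma tendsto_log_div_neg_log_of_le_mul {u v : ℝ → ℕ} {C : ℕ} {D : ℝ}
    (hu : Tendsto (fun δ => Real.log (u δ) / -Real.log δ) (𝓝[>] 0) (𝓝 D))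
    (hvu : ∀ δ > 0, v δ ≤ C * u δ) (huv : ∀ δ > 0, u δ ≤ C * v δ) :
    Tendsto (fun δ => Real.log (v δ) / -Real.log δ) (𝓝[>] 0) (𝓝 D) := by
  have hneglog : Tendsto (fun δ : ℝ => -Real.log δ) (𝓝[>] 0) atTop :=
    tendsto_neg_atBot_atTop.comp Real.tendsto_log_nhdsGT_zero
  have hdiff : Tendsto (fun δ => Real.log (v δ) / -Real.log δ - Real.log (u δ) / -Real.log δ)
      (𝓝[>] 0) (𝓝 0) := by
    refine squeeze_zero_norm' (a := fun δ => Real.log C / -Real.log δ) ?_ (by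
      simpa only [mul_zero, div_eq_mul_inv, Pi.inv_apply] using
        hneglog.inv_tendsto_atTop.const_mul (Real.log C))
    filter_upwards [Ioo_mem_nhdsGT (zero_lt_one' ℝ)] with δ ⟨hδ0, hδ1⟩
    have hpos : 0 < -Real.log δ := neg_pos.2 (Real.log_neg hδ0 hδ1)
    rw [div_sub_div_same, Real.norm_eq_abs, abs_div, abs_of_pos hpos]
    exact div_le_div_of_nonneg_right
      (abs_log_sub_log_le_of_le_mul (hvu δ hδ0) (huv δ hδ0)) hpos.le
  simpa using hu.add hdiff

lemma Int.abs_floor_div_sub_floor_div_le {δ x y L : ℝ} (hδ : 0 < δ) (h : |x - y| ≤ L * δ) :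
    |⌊x / δ⌋ - ⌊y / δ⌋| ≤ ⌈L⌉ := by
  have hL : |x / δ - y / δ| ≤ L := by
    rwa [← sub_div, abs_div, abs_of_pos hδ, div_le_iff₀ hδ]
  have key {a b : ℝ} (hab : |a - b| ≤ L) : ⌊a⌋ - ⌊b⌋ ≤ ⌈L⌉ := by
    have : ((⌊a⌋ - ⌊b⌋ - 1 : ℤ) : ℝ) < L := by
      push_cast
      linarith [Int.floor_le a, Int.sub_one_lt_floor b, (abs_le.1 hab).2]
    linarith [Int.lt_ceil.2 this]
  exact abs_sub_le_iff.2 ⟨key hL, key (abs_sub_comm (x / δ) _ ▸ hL)⟩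

noncomputable def meshIndex (δ : ℝ) (p : ℝ × ℝ) : ℤ × ℤ := (⌊p.1 / δ⌋, ⌊p.2 / δ⌋)

lemma mem_Ico_mul_iff_floor_div_eq {δ x : ℝ} (hδ : 0 < δ) {k : ℤ} :
    x ∈ Ico ((k : ℝ) * δ) ((k + 1) * δ) ↔ ⌊x / δ⌋ = k := by
  rw [mem_Ico, Int.floor_eq_iff, le_div_iff₀ hδ, div_lt_iff₀ hδ]

lemma meshCount2_eq_ncard_image {δ : ℝ} (hδ : 0 < δ) (A : Set (ℝ × ℝ)) :
    meshCount2 δ A = (meshIndex δ '' A).ncard := by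
  unfold meshCount2
  congr 1
  ext k
  simp only [Set.Nonempty, mem_inter_iff, mem_prod, mem_Ico_mul_iff_floor_div_eq hδ, mem_ofPred_eq,
    mem_image, meshIndex, Prod.ext_iff]

lemma finite_image_meshIndex {δ : ℝ} (hδ : 0 < δ) {A : Set (ℝ × ℝ)} (hA : IsBounded A) :
    (meshIndex δ '' A).Finite := by
  obtain ⟨R, hR⟩ := isBounded_iff_forall_norm_le.1 hA
  refine ((finite_Icc ⌊-R / δ⌋ ⌊R / δ⌋).prod (finite_Icc ⌊-R / δ⌋ ⌊R / δ⌋)).subset ?_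
  rintro _ ⟨p, hp, rfl⟩
  have hbound {x : ℝ} (hx : |x| ≤ R) : ⌊x / δ⌋ ∈ Icc ⌊-R / δ⌋ ⌊R / δ⌋ :=
    ⟨Int.floor_mono (by gcongr; exact neg_le_of_abs_le hx),
      Int.floor_mono (by gcongr; exact le_of_abs_le hx)⟩
  have hp' := Prod.norm_def p ▸ hR p hp
  exact ⟨hbound ((le_max_left _ _).trans hp'), hbound ((le_max_right _ _).trans hp')⟩

lemma dist_le_of_meshIndex_eq {δ : ℝ} (hδ : 0 < δ) {p q : ℝ × ℝ}
    (h : meshIndex δ p = meshIndex δ q) : dist p q ≤ δ := by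
  have hcoord {x y : ℝ} (hxy : ⌊x / δ⌋ = ⌊y / δ⌋) : dist x y ≤ δ := by
    have := Int.abs_sub_lt_one_of_floor_eq_floor hxy
    rw [← sub_div, abs_div, abs_of_pos hδ, div_lt_one hδ] at this
    exact this.le
  rw [Prod.dist_eq]
  exact max_le (hcoord (congrArg Prod.fst h)) (hcoord (congrArg Prod.snd h))

lemma meshIndex_sub_meshIndex_mem {δ L : ℝ} (hδ : 0 < δ) {p q : ℝ × ℝ} (h : dist p q ≤ L * δ) :
    meshIndex δ p - meshIndex δ q ∈ Icc (-⌈L⌉) ⌈L⌉ ×ˢ Icc (-⌈L⌉) ⌈L⌉ := by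
  rw [Prod.dist_eq, max_le_iff, Real.dist_eq, Real.dist_eq] at h
  exact ⟨abs_le.1 (Int.abs_floor_div_sub_floor_div_le hδ h.1),
    abs_le.1 (Int.abs_floor_div_sub_floor_div_le hδ h.2)⟩

lemma LipschitzOnWith.isBounded_image {α β : Type*} [PseudoMetricSpace α] [PseudoMetricSpace β]
    {K : ℝ≥0} {f : α → β} {s : Set α} (hf : LipschitzOnWith K f s) (hs : IsBounded s) :
    IsBounded (f '' s) := by
  obtain ⟨C, hC⟩ := Metric.isBounded_iff.1 hs
  exact Metric.isBounded_iff.2 ⟨K * C, forall_mem_image.2 fun x hx => forall_mem_image.2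
    fun y hy => (hf.dist_le_mul x hx y hy).trans (by gcongr; exact hC hx hy)⟩

theorem meshCount2_image_le {A : Set (ℝ × ℝ)} (hA : IsBounded A) {g : ℝ × ℝ → ℝ × ℝ}
    {L : ℝ≥0} (hg : LipschitzOnWith L g A) {δ : ℝ} (hδ : 0 < δ) :
    meshCount2 δ (g '' A) ≤ (2 * ⌈(L : ℝ)⌉₊ + 1) ^ 2 * meshCount2 δ A := by
  set c : ℤ := ⌈(L : ℝ)⌉ with hc
  -- `r j` is a point of `A` in the square `j`; `g` moves any other point of that square by `≤ Lδ`.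
  set r := Function.invFunOn (meshIndex δ) A
  have hfin : ((meshIndex δ '' A) ×ˢ (Icc (-c) c ×ˢ Icc (-c) c)).Finite :=
    (finite_image_meshIndex hδ hA).prod ((finite_Icc _ _).prod (finite_Icc _ _))
  have hsub : meshIndex δ '' (g '' A) ⊆
      (fun jk : (ℤ × ℤ) × (ℤ × ℤ) => meshIndex δ (g (r jk.1)) + jk.2) ''
        ((meshIndex δ '' A) ×ˢ (Icc (-c) c ×ˢ Icc (-c) c)) := by
    rintro _ ⟨_, ⟨p, hp, rfl⟩, rfl⟩
    have hj : ∃ q ∈ A, meshIndex δ q = meshIndex δ p := ⟨p, hp, rfl⟩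
    refine ⟨(meshIndex δ p, meshIndex δ (g p) - meshIndex δ (g (r (meshIndex δ p)))),
      ⟨mem_image_of_mem _ hp, meshIndex_sub_meshIndex_mem hδ ?_⟩, add_sub_cancel _ _⟩
    calc dist (g p) (g (r _)) ≤ L * dist p (r _) :=
          hg.dist_le_mul p hp _ (Function.invFunOn_mem hj)
      _ ≤ L * δ := by gcongr; exact dist_le_of_meshIndex_eq hδ (Function.invFunOn_eq hj).symm
  have hcard : (Icc (-c) c).ncard = 2 * ⌈(L : ℝ)⌉₊ + 1 := by
    rw [← Finset.coe_Icc, ncard_coe_finset, Int.card_Icc, hc,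
      ← Int.natCast_ceil_eq_ceil L.coe_nonneg]
    omega
  rw [meshCount2_eq_ncard_image hδ, meshCount2_eq_ncard_image hδ]
  calc _ ≤ _ := ncard_le_ncard hsub (hfin.image _)
    _ ≤ _ := ncard_image_le hfin
    _ = _ := by rw [ncard_prod, ncard_prod, hcard]; ring

theorem HasBoxDim2.image_of_leftInvOn {A : Set (ℝ × ℝ)} {D : ℝ} (hD : HasBoxDim2 A D)
    (hA : IsBounded A) {g g' : ℝ × ℝ → ℝ × ℝ} {L L' : ℝ≥0} (hg : LipschitzOnWith L g A)
    (hg' : LipschitzOnWith L' g' (g '' A)) (hinv : LeftInvOn g' g A) :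
    HasBoxDim2 (g '' A) D := by
  refine tendsto_log_div_neg_log_of_le_mul hD
    (fun δ hδ => meshCount2_image_le hA (hg.weaken (le_max_left L L')) hδ) fun δ hδ => ?_
  simpa only [hinv.image_image] using
    meshCount2_image_le (hg.isBounded_image hA) (hg'.weaken (le_max_right L L')) hδ

lemma LipschitzOnWith.inv₀ {α 𝕜 : Type*} [PseudoMetricSpace α] [NormedDivisionRing 𝕜]
    {f : α → 𝕜} {s : Set α} {K m : ℝ≥0} (hf : LipschitzOnWith K f s) (hm : 0 < m)
    (hfm : ∀ x ∈ s, (m : ℝ) ≤ ‖f x‖) : LipschitzOnWith (K / m ^ 2) (fun x => (f x)⁻¹) s := by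
  refine LipschitzOnWith.of_dist_le_mul fun x hx y hy => ?_
  have hm' : (0 : ℝ) < m := hm
  have hf0 {z : α} (hz : z ∈ s) : f z ≠ 0 := norm_pos_iff.1 (hm'.trans_le (hfm z hz))
  calc dist (f x)⁻¹ (f y)⁻¹ = ‖f x‖⁻¹ * dist (f y) (f x) * ‖f y‖⁻¹ := by
        rw [dist_eq_norm, inv_sub_inv' (hf0 hx) (hf0 hy), norm_mul, norm_mul, norm_inv, norm_inv,
          dist_eq_norm]
    _ ≤ (m : ℝ)⁻¹ * (K * dist y x) * (m : ℝ)⁻¹ := by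
        gcongr
        exacts [hfm x hx, hf.dist_le_mul y hy x hx, hfm y hy]
    _ = ((K / m ^ 2 : ℝ≥0) : ℝ) * dist x y := by
        push_cast
        rw [dist_comm]
        field_simp

lemma LipschitzOnWith.exists_lipschitzOnWith_mul_snd {s : Set ℝ} {μ : ℝ → ℝ} {K : ℝ≥0}
    (hμ : LipschitzOnWith K μ s) (hs : IsBounded s) (R : ℝ) :
    ∃ L, LipschitzOnWith L (fun p : ℝ × ℝ => (p.1, μ p.1 * p.2))
      (s ×ˢ Metric.closedBall 0 R) := by
  obtain ⟨M, hM⟩ := isBounded_iff_forall_norm_le.1 (hμ.isBounded_image hs)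
  refine ⟨_, LipschitzOnWith.of_dist_le' (K := max 1 (M + K * R)) ?_⟩
  rintro ⟨x, y⟩ ⟨hx, hy⟩ ⟨x', y'⟩ ⟨hx', hy'⟩
  rw [mem_closedBall_zero_iff, Real.norm_eq_abs] at hy hy'
  have hμx : |μ x| ≤ M := hM _ (mem_image_of_mem μ hx)
  have hμxx' : |μ x - μ x'| ≤ K * |x - x'| := by
    simpa only [Real.dist_eq] using hμ.dist_le_mul x hx x' hx'
  have hdx : |x - x'| ≤ dist (x, y) (x', y') := by
    rw [Prod.dist_eq, Real.dist_eq]; exact le_max_left _ _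
  have hdy : |y - y'| ≤ dist (x, y) (x', y') := by
    rw [Prod.dist_eq, Real.dist_eq, Real.dist_eq]; exact le_max_right _ _
  set d := dist (x, y) (x', y')
  rw [Prod.dist_eq, Real.dist_eq, Real.dist_eq]
  refine max_le (hdx.trans (le_mul_of_one_le_left dist_nonneg (le_max_left _ _))) ?_
  have hR : 0 ≤ R := (abs_nonneg _).trans hy'
  calc |μ x * y - μ x' * y'| = |μ x * (y - y') + y' * (μ x - μ x')| := by ring_nf
    _ ≤ |μ x| * |y - y'| + |y'| * |μ x - μ x'| := by
        rw [← abs_mul, ← abs_mul]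
        exact abs_add_le _ _
    _ ≤ M * d + R * (K * d) := by
        gcongr
        · exact (abs_nonneg _).trans hμx
        · exact hμxx'.trans (by gcongr)
    _ = (M + K * R) * d := by ring
    _ ≤ max 1 (M + K * R) * d := by gcongr; exact le_max_right _ _

lemma Gr1_eq_image (h : ℝ → ℝ) : Gr1 h = (fun x => (x, h x)) '' Icc 0 1 := by
  ext ⟨x, y⟩
  simp [Gr1, eq_comm]

lemma isBounded_Gr1 {h : ℝ → ℝ} (hh : ContinuousOn h (Icc 0 1)) : IsBounded (Gr1 h) := by
  rw [Gr1_eq_image]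
  exact (isCompact_Icc.image_of_continuousOn (continuousOn_id.prodMk hh)).isBounded

lemma Gr1_mul_eq_image (μ h : ℝ → ℝ) :
    Gr1 (fun x => μ x * h x) = (fun p : ℝ × ℝ => (p.1, μ p.1 * p.2)) '' Gr1 h := by
  rw [Gr1_eq_image, Gr1_eq_image, image_image]

lemma exists_lipschitzOnWith_mul_snd_Gr1 {μ h : ℝ → ℝ} {K : ℝ≥0}
    (hμ : LipschitzOnWith K μ (Icc 0 1)) (hh : ContinuousOn h (Icc 0 1)) :
    ∃ L, LipschitzOnWith L (fun p : ℝ × ℝ => (p.1, μ p.1 * p.2)) (Gr1 h) := by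
  obtain ⟨R, hR⟩ := isCompact_Icc.exists_bound_of_continuousOn hh
  obtain ⟨L, hL⟩ := hμ.exists_lipschitzOnWith_mul_snd (Metric.isBounded_Icc 0 1) R
  exact ⟨L, hL.mono fun p ⟨hx, hy⟩ => ⟨hx, mem_closedBall_zero_iff.2 (hy ▸ hR _ hx)⟩⟩

/-- **Lemma 8.** For continuous `f : [0,1] → ℝ` whose graph has a box-counting dimension and
a Lipschitz `λ : [0,1] → ℝ` with `min |λ| > 0`, the graph of `λf` has the same box-counting
dimension as that of `f`. -/
theorem stmt12 (f lam : ℝ → ℝ) (hf : ContinuousOn f (Icc 0 1))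
    (hlip : ∃ K : NNReal, LipschitzOnWith K lam (Icc 0 1))
    (hmin : 0 < sInf ((fun x => |lam x|) '' Icc 0 1))
    (Df : ℝ) (hDf : HasBoxDim2 (Gr1 f) Df) :
    HasBoxDim2 (Gr1 fun x => lam x * f x) Df := by
  obtain ⟨K, hK⟩ := hlip
  set m : ℝ≥0 := ⟨_, hmin.le⟩
  have hm_le : ∀ x ∈ Icc (0 : ℝ) 1, (m : ℝ) ≤ ‖lam x‖ := fun x hx =>
    csInf_le ⟨0, forall_mem_image.2 fun _ _ => abs_nonneg _⟩ (mem_image_of_mem _ hx)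
  have hlam0 : ∀ x ∈ Icc (0 : ℝ) 1, lam x ≠ 0 := fun x hx =>
    norm_pos_iff.1 (hmin.trans_le (hm_le x hx))
  obtain ⟨L, hΦ⟩ := exists_lipschitzOnWith_mul_snd_Gr1 hK hf
  obtain ⟨L', hΨ⟩ :=
    exists_lipschitzOnWith_mul_snd_Gr1 (h := fun x => lam x * f x) (hK.inv₀ hmin hm_le)
      (hK.continuousOn.mul hf)
  rw [Gr1_mul_eq_image] at hΨ ⊢
  refine hDf.image_of_leftInvOn (isBounded_Gr1 hf) hΦ hΨ fun p ⟨hp, _⟩ => ?_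
  simp [inv_mul_cancel_left₀ (hlam0 _ hp)]
end

section
/- (Theorem 4, upper bound for sums) Let f_i, g_j : [0,1] → R (i = 1, …, N; j = 1, …, M) be continuous functions whose graphs have box-counting dimensions (the defining limits exist), and let λ_i, μ_j : [0,1]² → R be bivariate Lipschitz functions. Define F : [0,1]² → R by F(x,y) = Σ_{i=1}^N λ_i(x,y) f_i(x) + Σ_{j=1}^M μ_j(x,y) g_j(y). Then the upper box-counting dimension of the graph of F satisfies dim̄_B Gr(F) ≤ 1 + max_{i,j} {dim_B Gr(f_i), dim_B Gr(g_j)}. -/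
open Set Filter Topology

/-! In a column of width `δ`, a continuous `h` oscillates by at most `δ` times the number of
mesh squares its graph meets there (intermediate value theorem), and these column counts add up
to `N_δ(Gr h)`. Together with the Lipschitz bounds on `λ_i, μ_j`, the oscillation of `F` on a mesh
square is `δ` times a constant plus the column counts of the `f_i` and `g_j`, and so is the number
of cubes above the square. Summing over the `≈ δ⁻¹` columns in each direction, and absorbing the
constants with `N_δ(Gr f_i) ≥ δ⁻¹`, gives `N_δ(Gr F) ≲ δ⁻¹ max (N_δ(Gr f_i), N_δ(Gr g_j))`. -/

open scoped NNReal

theorem Int.cast_card_Icc_floor {a b : ℝ} (h : a ≤ b) :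
    ((Finset.Icc ⌊a⌋ ⌊b⌋).card : ℝ) = ⌊b⌋ + 1 - ⌊a⌋ := by
  have : ⌊a⌋ ≤ ⌊b⌋ + 1 := (Int.floor_mono h).trans (Int.le_add_one le_rfl)
  rw [Int.card_Icc, ← Int.cast_natCast, Int.toNat_of_nonneg (by omega)]
  push_cast; ring

theorem Int.card_Icc_floor_le {a b : ℝ} (h : a ≤ b) :
    ((Finset.Icc ⌊a⌋ ⌊b⌋).card : ℝ) ≤ b - a + 2 := by
  rw [Int.cast_card_Icc_floor h]
  linarith [Int.floor_le b, Int.lt_floor_add_one a]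

theorem Int.sub_lt_card_Icc_floor {a b : ℝ} (h : a ≤ b) :
    b - a < (Finset.Icc ⌊a⌋ ⌊b⌋).card := by
  rw [Int.cast_card_Icc_floor h]
  linarith [Int.floor_le a, Int.lt_floor_add_one b]

theorem Int.exists_mem_Icc_floor_eq {a b : ℝ} {m : ℤ} (hab : a ≤ b) (ha : ⌊a⌋ ≤ m) (hb : m ≤ ⌊b⌋) :
    ∃ y ∈ Icc a b, ⌊y⌋ = m := by
  refine ⟨max a m, ⟨le_max_left _ _, max_le hab ((Int.cast_le.2 hb).trans (Int.floor_le b))⟩, ?_⟩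
  rcases le_total a m with ham | hma
  · rw [max_eq_right ham, Int.floor_intCast]
  · rw [max_eq_left hma]
    exact le_antisymm ha (Int.le_floor.2 hma)

def meshInterval (δ : ℝ) (k : ℤ) : Set ℝ := Ico (k * δ) ((k + 1) * δ)

noncomputable def meshIndices (δ : ℝ) : Finset ℤ := Finset.Icc 0 ⌊1 / δ⌋

section Mesh

variable {δ x y : ℝ} {k : ℤ}

theorem mem_meshInterval_iff (hδ : 0 < δ) : x ∈ meshInterval δ k ↔ ⌊x / δ⌋ = k := by
  rw [Int.floor_eq_iff, meshInterval, mem_Ico, le_div_iff₀ hδ, div_lt_iff₀ hδ]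

theorem dist_le_of_mem_meshInterval (hx : x ∈ meshInterval δ k) (hy : y ∈ meshInterval δ k) :
    dist x y ≤ δ := by
  rw [Real.dist_eq, abs_sub_le_iff]
  constructor <;> linarith [hx.1, hx.2, hy.1, hy.2]

theorem mem_meshIndices_of_mem (hδ : 0 < δ) (hx : x ∈ Icc 0 1) (hk : x ∈ meshInterval δ k) :
    k ∈ meshIndices δ := by
  rw [(mem_meshInterval_iff hδ).1 hk |>.symm, meshIndices, Finset.mem_Icc]
  exact ⟨Int.floor_nonneg.2 (div_nonneg hx.1 hδ.le), Int.floor_mono (by gcongr; exact hx.2)⟩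

theorem mul_mem_of_mem_meshIndices (hδ : 0 < δ) (hk : k ∈ meshIndices δ) :
    (k : ℝ) * δ ∈ Icc 0 1 ∩ meshInterval δ k := by
  rw [meshIndices, Finset.mem_Icc] at hk
  have hk₁ : (k : ℝ) ≤ 1 / δ := (Int.cast_le.2 hk.2).trans (Int.floor_le _)
  refine ⟨⟨mul_nonneg (by exact_mod_cast hk.1) hδ.le, by rwa [le_div_iff₀ hδ] at hk₁⟩, le_rfl, by nlinarith⟩

theorem card_meshIndices_le (hδ : 0 < δ) (hδ₁ : δ ≤ 1) : ((meshIndices δ).card : ℝ) ≤ 2 / δ := by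
  have h₁ : 1 ≤ 1 / δ := by rwa [le_div_iff₀ hδ, one_mul]
  have := Int.cast_card_Icc_floor (zero_le_one.trans h₁)
  rw [Int.floor_zero] at this
  rw [meshIndices, this]
  linarith [Int.floor_le (1 / δ), show 2 / δ = 1 / δ + 1 / δ by ring]

end Mesh

def meshColumn (h : ℝ → ℝ) (δ : ℝ) (k : ℤ) : Set ℤ :=
  {m | (Gr1 h ∩ meshInterval δ k ×ˢ meshInterval δ m).Nonempty}

section MeshColumn

variable {h : ℝ → ℝ} {δ B : ℝ}

theorem meshColumn_subset_Icc (hδ : 0 < δ) (hB : ∀ x ∈ Icc 0 1, |h x| ≤ B) (k : ℤ) :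
    meshColumn h δ k ⊆ Icc ⌊-B / δ⌋ ⌊B / δ⌋ := by
  rintro m ⟨⟨x, y⟩, ⟨hx, hy⟩, -, hm⟩
  rw [(mem_meshInterval_iff hδ).1 hm |>.symm, show y = h x from hy]
  have := abs_le.1 (hB x hx)
  exact ⟨Int.floor_mono (by gcongr; exact this.1), Int.floor_mono (by gcongr; exact this.2)⟩

theorem meshColumn_finite (hδ : 0 < δ) (hB : ∀ x ∈ Icc 0 1, |h x| ≤ B) (k : ℤ) :
    (meshColumn h δ k).Finite :=
  (finite_Icc _ _).subset (meshColumn_subset_Icc hδ hB k)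

theorem one_le_ncard_meshColumn (hδ : 0 < δ) (hB : ∀ x ∈ Icc 0 1, |h x| ≤ B) {k : ℤ}
    (hk : k ∈ meshIndices δ) : 1 ≤ (meshColumn h δ k).ncard := by
  obtain ⟨hx, hxk⟩ := mul_mem_of_mem_meshIndices hδ hk
  refine (ncard_pos (meshColumn_finite hδ hB k)).2 ?_
  exact ⟨_, ⟨_, h _⟩, ⟨hx, rfl⟩, hxk, (mem_meshInterval_iff hδ).2 rfl⟩

theorem sum_ncard_meshColumn_le_meshCount2 (hδ : 0 < δ) (hB : ∀ x ∈ Icc 0 1, |h x| ≤ B) :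
    ∑ k ∈ meshIndices δ, (meshColumn h δ k).ncard ≤ meshCount2 δ (Gr1 h) := by
  have hfin := meshColumn_finite hδ hB
  have hS : {k : ℤ × ℤ | (Gr1 h ∩ meshInterval δ k.1 ×ˢ meshInterval δ k.2).Nonempty}.Finite :=
    ((meshIndices δ).finite_toSet.prod (finite_Icc ⌊-B / δ⌋ ⌊B / δ⌋)).subset
      fun k ⟨p, hp, hk₁, hk₂⟩ => ⟨mem_meshIndices_of_mem hδ hp.1 hk₁,
        meshColumn_subset_Icc hδ hB k.1 ⟨p, hp, hk₁, hk₂⟩⟩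
  calc ∑ k ∈ meshIndices δ, (meshColumn h δ k).ncard
      = ((meshIndices δ).sigma fun k => (hfin k).toFinset).card := by
        rw [Finset.card_sigma]
        exact Finset.sum_congr rfl fun k _ => ncard_eq_toFinset_card _ (hfin k)
    _ ≤ meshCount2 δ (Gr1 h) := by
        rw [← ncard_coe_finset]
        refine ncard_le_ncard_of_injOn (fun km => (km.1, km.2))
          (fun km hkm => (hfin km.1).mem_toFinset.1 (Finset.mem_sigma.1 hkm).2) ?_ hS
        rintro ⟨k, m⟩ - ⟨k', m'⟩ - ⟨⟩
        rfl

theorem card_meshIndices_le_meshCount2 (hδ : 0 < δ) (hB : ∀ x ∈ Icc 0 1, |h x| ≤ B) :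
    (meshIndices δ).card ≤ meshCount2 δ (Gr1 h) := by
  rw [Finset.card_eq_sum_ones]
  exact (Finset.sum_le_sum fun k hk => one_le_ncard_meshColumn hδ hB hk).trans
    (sum_ncard_meshColumn_le_meshCount2 hδ hB)

theorem abs_sub_le_mul_ncard_meshColumn (hδ : 0 < δ) (hh : ContinuousOn h (Icc 0 1))
    (hB : ∀ x ∈ Icc 0 1, |h x| ≤ B) {k : ℤ} {x x' : ℝ} (hx : x ∈ Icc 0 1 ∩ meshInterval δ k)
    (hx' : x' ∈ Icc 0 1 ∩ meshInterval δ k) : |h x - h x'| ≤ δ * (meshColumn h δ k).ncard := by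
  wlog hle : h x' ≤ h x generalizing x x'
  · rw [abs_sub_comm]; exact this hx' hx (le_of_not_ge hle)
  have hconn : uIcc x' x ⊆ Icc 0 1 ∩ meshInterval δ k :=
    (ordConnected_Icc.inter ordConnected_Ico).uIcc_subset hx' hx
  have hsub : ↑(Finset.Icc ⌊h x' / δ⌋ ⌊h x / δ⌋) ⊆ meshColumn h δ k := by
    intro m hm
    rw [Finset.coe_Icc] at hm
    obtain ⟨y, hy, hym⟩ :=
      Int.exists_mem_Icc_floor_eq (div_le_div_of_nonneg_right hle hδ.le) hm.1 hm.2
    obtain ⟨t, ht, hty⟩ : y * δ ∈ h '' uIcc x' x :=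
      intermediate_value_uIcc (hh.mono (hconn.trans inter_subset_left))
        (by rw [uIcc_of_le hle]; exact ⟨(div_le_iff₀ hδ).1 hy.1, (le_div_iff₀ hδ).1 hy.2⟩)
    refine ⟨(t, h t), ⟨(hconn ht).1, rfl⟩, (hconn ht).2, (mem_meshInterval_iff hδ).2 ?_⟩
    rwa [hty, mul_div_cancel_right₀ _ hδ.ne']
  have hcard := Int.sub_lt_card_Icc_floor (div_le_div_of_nonneg_right hle hδ.le)
  rw [← sub_div, div_lt_iff₀' hδ] at hcard
  rw [abs_of_nonneg (sub_nonneg.2 hle)]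
  refine hcard.le.trans (mul_le_mul_of_nonneg_left ?_ hδ.le)
  exact_mod_cast (ncard_coe_finset _).symm.trans_le
    (ncard_le_ncard hsub (meshColumn_finite hδ hB k))

end MeshColumn

theorem abs_mul_sub_mul_le_of_mem_meshInterval {E : Type*} [PseudoMetricSpace E] {s : Set E}
    {lam : E → ℝ} {h : ℝ → ℝ} {K : ℝ≥0} {C B δ : ℝ} (hlam : LipschitzOnWith K lam s)
    (hC : ∀ p ∈ s, |lam p| ≤ C) (hδ : 0 < δ) (hh : ContinuousOn h (Icc 0 1))
    (hB : ∀ x ∈ Icc 0 1, |h x| ≤ B) {p q : E} (hp : p ∈ s) (hq : q ∈ s) (hpq : dist p q ≤ δ)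
    {k : ℤ} {x x' : ℝ} (hx : x ∈ Icc 0 1 ∩ meshInterval δ k)
    (hx' : x' ∈ Icc 0 1 ∩ meshInterval δ k) :
    |lam p * h x - lam q * h x'| ≤ δ * (K * B + C * (meshColumn h δ k).ncard) := by
  have hlam_pq : |lam p - lam q| ≤ K * δ := by
    rw [← Real.dist_eq]
    exact (hlam.dist_le_mul p hp q hq).trans (by gcongr)
  have hC₀ : 0 ≤ C := (abs_nonneg _).trans (hC q hq)
  calc |lam p * h x - lam q * h x'| = |(lam p - lam q) * h x + lam q * (h x - h x')| := by
        ring_nf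
    _ ≤ |lam p - lam q| * |h x| + |lam q| * |h x - h x'| := by
        rw [← abs_mul, ← abs_mul]; exact abs_add_le _ _
    _ ≤ K * δ * B + C * (δ * (meshColumn h δ k).ncard) := by
        gcongr
        exacts [hB x hx.1, hC q hq, abs_sub_le_mul_ncard_meshColumn hδ hh hB hx hx']
    _ = δ * (K * B + C * (meshColumn h δ k).ncard) := by ring

theorem meshCount3_graph_le_sum {F : ℝ → ℝ → ℝ} {δ : ℝ} (hδ : 0 < δ) (c : ℤ → ℤ → ℝ)
    (hF : ∀ ⦃k₁ k₂ : ℤ⦄ ⦃x x' y y' : ℝ⦄, x ∈ Icc 0 1 ∩ meshInterval δ k₁ →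
      x' ∈ Icc 0 1 ∩ meshInterval δ k₁ → y ∈ Icc 0 1 ∩ meshInterval δ k₂ →
      y' ∈ Icc 0 1 ∩ meshInterval δ k₂ → |F x y - F x' y'| ≤ δ * c k₁ k₂) :
    (meshCount3 δ (Gr2 F) : ℝ) ≤
      ∑ k₁ ∈ meshIndices δ, ∑ k₂ ∈ meshIndices δ, (2 * c k₁ k₂ + 2) := by
  set A := meshIndices δ
  have hbase : ∀ k ∈ A, (k : ℝ) * δ ∈ Icc 0 1 ∩ meshInterval δ k :=
    fun k hk => mul_mem_of_mem_meshIndices hδ hk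
  have hc : ∀ k ∈ A ×ˢ A, 0 ≤ c k.1 k.2 := by
    intro k hk
    rw [Finset.mem_product] at hk
    have := hF (hbase _ hk.1) (hbase _ hk.1) (hbase _ hk.2) (hbase _ hk.2)
    rw [sub_self, abs_zero] at this
    exact nonneg_of_mul_nonneg_right this hδ
  -- the values of `F / δ` over the mesh square `k` lie within `c k` of `z k`
  let z : ℤ × ℤ → ℝ := fun k => F (k.1 * δ) (k.2 * δ) / δ
  let T : Finset (ℤ × ℤ × ℤ) := (A ×ˢ A).biUnion fun k =>
    {k.1} ×ˢ {k.2} ×ˢ Finset.Icc ⌊z k - c k.1 k.2⌋ ⌊z k + c k.1 k.2⌋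
  have hsub : {k : ℤ × ℤ × ℤ | (Gr2 F ∩ meshInterval δ k.1 ×ˢ
      meshInterval δ k.2.1 ×ˢ meshInterval δ k.2.2).Nonempty} ⊆ T := by
    rintro ⟨k₁, k₂, k₃⟩ ⟨⟨x, y, w⟩, ⟨hx, hy, hw⟩, hxk, hyk, hwk⟩
    change w = F x y at hw
    subst hw
    dsimp only at hx hy hxk hyk hwk
    have hk₁ := mem_meshIndices_of_mem hδ hx hxk
    have hk₂ := mem_meshIndices_of_mem hδ hy hyk
    have hosc := abs_le.1 (hF ⟨hx, hxk⟩ (hbase _ hk₁) ⟨hy, hyk⟩ (hbase _ hk₂))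
    have hk₃ : ⌊F x y / δ⌋ = k₃ := (mem_meshInterval_iff hδ).1 hwk
    simp only [T, Finset.coe_biUnion, mem_iUnion, Finset.mem_coe, Finset.mem_product,
      Finset.mem_singleton, Finset.mem_Icc, exists_prop]
    refine ⟨(k₁, k₂), ⟨hk₁, hk₂⟩, rfl, rfl, ?_, ?_⟩ <;> rw [← hk₃] <;> apply Int.floor_mono
    · rw [le_div_iff₀ hδ, sub_mul, div_mul_cancel₀ _ hδ.ne']; linarith [hosc.1]
    · rw [div_le_iff₀ hδ, add_mul, div_mul_cancel₀ _ hδ.ne']; linarith [hosc.2]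
  calc (meshCount3 δ (Gr2 F) : ℝ) ≤ T.card := by
        exact_mod_cast (ncard_le_ncard hsub T.finite_toSet).trans_eq (ncard_coe_finset T)
    _ ≤ ∑ k ∈ A ×ˢ A, ((Finset.Icc ⌊z k - c k.1 k.2⌋ ⌊z k + c k.1 k.2⌋).card : ℝ) := by
        exact_mod_cast Finset.card_biUnion_le.trans_eq
          (Finset.sum_congr rfl fun k _ => by simp)
    _ ≤ ∑ k ∈ A ×ˢ A, (2 * c k.1 k.2 + 2) := Finset.sum_le_sum fun k hk =>
        (Int.card_Icc_floor_le (by linarith [hc k hk])).trans_eq (by ring)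
    _ = ∑ k₁ ∈ A, ∑ k₂ ∈ A, (2 * c k₁ k₂ + 2) := Finset.sum_product _ _ _

theorem sum_meshIndices_sum_le {ι : Type*} [Fintype ι] {h : ι → ℝ → ℝ} {a C B : ι → ℝ} {δ P : ℝ}
    (hδ : 0 < δ) (ha : ∀ i, 0 ≤ a i) (hC : ∀ i, 0 ≤ C i) (hB : ∀ i, ∀ x ∈ Icc 0 1, |h i x| ≤ B i)
    (hP : ∀ i, (meshCount2 δ (Gr1 (h i)) : ℝ) ≤ P) :
    ∑ k ∈ meshIndices δ, ∑ i, (a i + C i * (meshColumn (h i) δ k).ncard) ≤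
      (∑ i, (a i + C i)) * P := by
  rw [Finset.sum_comm, Finset.sum_mul]
  refine Finset.sum_le_sum fun i _ => ?_
  have hcard : ((meshIndices δ).card : ℝ) ≤ meshCount2 δ (Gr1 (h i)) := by
    exact_mod_cast card_meshIndices_le_meshCount2 hδ (hB i)
  have hsum : ∑ k ∈ meshIndices δ, ((meshColumn (h i) δ k).ncard : ℝ) ≤
      meshCount2 δ (Gr1 (h i)) := by
    exact_mod_cast sum_ncard_meshColumn_le_meshCount2 hδ (hB i)
  rw [Finset.sum_add_distrib, Finset.sum_const, nsmul_eq_mul, ← Finset.mul_sum, add_mul]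
  exact add_le_add
    ((mul_le_mul_of_nonneg_right (hcard.trans (hP i)) (ha i)).trans_eq (mul_comm _ _))
    (mul_le_mul_of_nonneg_left (hsum.trans (hP i)) (hC i))

def weightedSum {ι κ : Type*} [Fintype ι] [Fintype κ] (lam : ι → ℝ × ℝ → ℝ) (f : ι → ℝ → ℝ)
    (mu : κ → ℝ × ℝ → ℝ) (g : κ → ℝ → ℝ) (x y : ℝ) : ℝ :=
  (∑ i, lam i (x, y) * f i x) + ∑ j, mu j (x, y) * g j y

section WeightedSum

variable {ι κ : Type*} [Fintype ι] [Fintype κ] {lam : ι → ℝ × ℝ → ℝ} {f : ι → ℝ → ℝ}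
  {mu : κ → ℝ × ℝ → ℝ} {g : κ → ℝ → ℝ} {Klam : ι → ℝ≥0} {Kmu : κ → ℝ≥0} {Clam Bf : ι → ℝ}
  {Cmu Bg : κ → ℝ} {δ : ℝ}

theorem abs_weightedSum_sub_le (hδ : 0 < δ)
    (hlam : ∀ i, LipschitzOnWith (Klam i) (lam i) (Icc 0 1 ×ˢ Icc 0 1))
    (hClam : ∀ i, ∀ p ∈ Icc 0 1 ×ˢ Icc 0 1, |lam i p| ≤ Clam i)
    (hf : ∀ i, ContinuousOn (f i) (Icc 0 1)) (hBf : ∀ i, ∀ x ∈ Icc 0 1, |f i x| ≤ Bf i)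
    (hmu : ∀ j, LipschitzOnWith (Kmu j) (mu j) (Icc 0 1 ×ˢ Icc 0 1))
    (hCmu : ∀ j, ∀ p ∈ Icc 0 1 ×ˢ Icc 0 1, |mu j p| ≤ Cmu j)
    (hg : ∀ j, ContinuousOn (g j) (Icc 0 1)) (hBg : ∀ j, ∀ x ∈ Icc 0 1, |g j x| ≤ Bg j)
    {k₁ k₂ : ℤ} {x x' y y' : ℝ} (hx : x ∈ Icc 0 1 ∩ meshInterval δ k₁)
    (hx' : x' ∈ Icc 0 1 ∩ meshInterval δ k₁) (hy : y ∈ Icc 0 1 ∩ meshInterval δ k₂)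
    (hy' : y' ∈ Icc 0 1 ∩ meshInterval δ k₂) :
    |weightedSum lam f mu g x y - weightedSum lam f mu g x' y'| ≤
      δ * ((∑ i, (Klam i * Bf i + Clam i * (meshColumn (f i) δ k₁).ncard)) +
        ∑ j, (Kmu j * Bg j + Cmu j * (meshColumn (g j) δ k₂).ncard)) := by
  have hp : (x, y) ∈ Icc (0 : ℝ) 1 ×ˢ Icc 0 1 := ⟨hx.1, hy.1⟩
  have hq : (x', y') ∈ Icc (0 : ℝ) 1 ×ˢ Icc 0 1 := ⟨hx'.1, hy'.1⟩
  have hpq : dist (x, y) (x', y') ≤ δ := max_le (dist_le_of_mem_meshInterval hx.2 hx'.2)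
    (dist_le_of_mem_meshInterval hy.2 hy'.2)
  calc |weightedSum lam f mu g x y - weightedSum lam f mu g x' y'|
      = |(∑ i, (lam i (x, y) * f i x - lam i (x', y') * f i x')) +
          ∑ j, (mu j (x, y) * g j y - mu j (x', y') * g j y')| := by
        simp only [weightedSum, Finset.sum_sub_distrib]; ring_nf
    _ ≤ (∑ i, |lam i (x, y) * f i x - lam i (x', y') * f i x'|) +
          ∑ j, |mu j (x, y) * g j y - mu j (x', y') * g j y'| :=
        (abs_add_le _ _).trans (add_le_add (Finset.abs_sum_le_sum_abs _ _)
          (Finset.abs_sum_le_sum_abs _ _))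
    _ ≤ (∑ i, δ * (Klam i * Bf i + Clam i * (meshColumn (f i) δ k₁).ncard)) +
          ∑ j, δ * (Kmu j * Bg j + Cmu j * (meshColumn (g j) δ k₂).ncard) := by
        gcongr with i _ j _
        · exact abs_mul_sub_mul_le_of_mem_meshInterval (hlam i) (hClam i) hδ (hf i) (hBf i)
            hp hq hpq hx hx'
        · exact abs_mul_sub_mul_le_of_mem_meshInterval (hmu j) (hCmu j) hδ (hg j) (hBg j)
            hp hq hpq hy hy'
    _ = _ := by rw [mul_add, Finset.mul_sum, Finset.mul_sum]

theorem meshCount3_weightedSum_le [Nonempty ι] (hδ : 0 < δ) (hδ₁ : δ ≤ 1)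
    (hlam : ∀ i, LipschitzOnWith (Klam i) (lam i) (Icc 0 1 ×ˢ Icc 0 1))
    (hClam : ∀ i, ∀ p ∈ Icc 0 1 ×ˢ Icc 0 1, |lam i p| ≤ Clam i)
    (hf : ∀ i, ContinuousOn (f i) (Icc 0 1)) (hBf : ∀ i, ∀ x ∈ Icc 0 1, |f i x| ≤ Bf i)
    (hmu : ∀ j, LipschitzOnWith (Kmu j) (mu j) (Icc 0 1 ×ˢ Icc 0 1))
    (hCmu : ∀ j, ∀ p ∈ Icc 0 1 ×ˢ Icc 0 1, |mu j p| ≤ Cmu j)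
    (hg : ∀ j, ContinuousOn (g j) (Icc 0 1)) (hBg : ∀ j, ∀ x ∈ Icc 0 1, |g j x| ≤ Bg j) {P : ℝ}
    (hPf : ∀ i, (meshCount2 δ (Gr1 (f i)) : ℝ) ≤ P)
    (hPg : ∀ j, (meshCount2 δ (Gr1 (g j)) : ℝ) ≤ P) :
    (meshCount3 δ (Gr2 (weightedSum lam f mu g)) : ℝ) ≤
      4 * ((∑ i, (Klam i * Bf i + Clam i)) + (∑ j, (Kmu j * Bg j + Cmu j)) + 1) / δ * P := by
  have h₀ : (0 : ℝ) ∈ Icc 0 1 := ⟨le_rfl, zero_le_one⟩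
  have hBf₀ i : 0 ≤ Bf i := (abs_nonneg _).trans (hBf i 0 h₀)
  have hBg₀ j : 0 ≤ Bg j := (abs_nonneg _).trans (hBg j 0 h₀)
  have hClam₀ i : 0 ≤ Clam i := (abs_nonneg _).trans (hClam i (0, 0) ⟨h₀, h₀⟩)
  have hCmu₀ j : 0 ≤ Cmu j := (abs_nonneg _).trans (hCmu j (0, 0) ⟨h₀, h₀⟩)
  set A := meshIndices δ
  set Sf := ∑ i, (Klam i * Bf i + Clam i)
  set Sg := ∑ j, (Kmu j * Bg j + Cmu j)
  have hSf : 0 ≤ Sf := Finset.sum_nonneg fun i _ => by have := hBf₀ i; have := hClam₀ i; positivity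
  have hSg : 0 ≤ Sg := Finset.sum_nonneg fun j _ => by have := hBg₀ j; have := hCmu₀ j; positivity
  obtain ⟨i₀⟩ := ‹Nonempty ι›
  have hA : (A.card : ℝ) ≤ P :=
    (Nat.cast_le.2 (card_meshIndices_le_meshCount2 hδ (hBf i₀))).trans (hPf i₀)
  have hsum_f := sum_meshIndices_sum_le hδ (fun i => mul_nonneg (Klam i).2 (hBf₀ i)) hClam₀ hBf hPf
  have hsum_g := sum_meshIndices_sum_le hδ (fun j => mul_nonneg (Kmu j).2 (hBg₀ j)) hCmu₀ hBg hPg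
  calc (meshCount3 δ (Gr2 (weightedSum lam f mu g)) : ℝ)
      ≤ ∑ k₁ ∈ A, ∑ k₂ ∈ A,
          (2 * ((∑ i, (Klam i * Bf i + Clam i * (meshColumn (f i) δ k₁).ncard)) +
            ∑ j, (Kmu j * Bg j + Cmu j * (meshColumn (g j) δ k₂).ncard)) + 2) :=
        meshCount3_graph_le_sum hδ _ fun _ _ _ _ _ _ hx hx' hy hy' =>
          abs_weightedSum_sub_le hδ hlam hClam hf hBf hmu hCmu hg hBg hx hx' hy hy'
    _ = 2 * A.card *
          ((∑ k ∈ A, ∑ i, (Klam i * Bf i + Clam i * (meshColumn (f i) δ k).ncard)) +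
            (∑ k ∈ A, ∑ j, (Kmu j * Bg j + Cmu j * (meshColumn (g j) δ k).ncard)) + A.card) := by
        simp only [Finset.sum_add_distrib, Finset.sum_const, nsmul_eq_mul, ← Finset.mul_sum]
        ring
    _ ≤ 2 * A.card * (Sf * P + Sg * P + P) := by gcongr; exacts [hsum_f, hsum_g]
    _ ≤ 2 * (2 / δ) * (Sf * P + Sg * P + P) := by
        have : 0 ≤ P := (Nat.cast_nonneg _).trans hA
        gcongr
        exact card_meshIndices_le hδ hδ₁
    _ = 4 * (Sf + Sg + 1) / δ * P := by ring

theorem exists_meshCount3_weightedSum_le [Nonempty ι] (hf : ∀ i, ContinuousOn (f i) (Icc 0 1))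
    (hg : ∀ j, ContinuousOn (g j) (Icc 0 1))
    (hlam : ∀ i, ∃ K : ℝ≥0, LipschitzOnWith K (lam i) (Icc 0 1 ×ˢ Icc 0 1))
    (hmu : ∀ j, ∃ K : ℝ≥0, LipschitzOnWith K (mu j) (Icc 0 1 ×ˢ Icc 0 1)) :
    ∃ K : ℝ, ∀ δ ∈ Ioo (0 : ℝ) 1, ∀ P : ℝ, (∀ i, (meshCount2 δ (Gr1 (f i)) : ℝ) ≤ P) →
      (∀ j, (meshCount2 δ (Gr1 (g j)) : ℝ) ≤ P) →
      (meshCount3 δ (Gr2 (weightedSum lam f mu g)) : ℝ) ≤ K / δ * P := by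
  choose Klam hKlam using hlam
  choose Kmu hKmu using hmu
  have hsquare : IsCompact (Icc (0 : ℝ) 1 ×ˢ Icc (0 : ℝ) 1) := isCompact_Icc.prod isCompact_Icc
  choose Clam hClam using fun i => hsquare.exists_bound_of_continuousOn (hKlam i).continuousOn
  choose Cmu hCmu using fun j => hsquare.exists_bound_of_continuousOn (hKmu j).continuousOn
  choose Bf hBf using fun i => isCompact_Icc.exists_bound_of_continuousOn (hf i)
  choose Bg hBg using fun j => isCompact_Icc.exists_bound_of_continuousOn (hg j)
  exact ⟨_, fun δ hδ P hPf hPg => meshCount3_weightedSum_le hδ.1 hδ.2.le hKlam hClam hf hBf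
    hKmu hCmu hg hBg hPf hPg⟩

end WeightedSum

theorem eventually_nonneg_log_div_neg_log (u : ℝ → ℕ) :
    ∀ᶠ δ in 𝓝[>] 0, 0 ≤ Real.log (u δ) / (-Real.log δ) := by
  filter_upwards [Ioo_mem_nhdsGT one_pos] with δ hδ
  exact div_nonneg (Real.log_natCast_nonneg _) (neg_nonneg.2 (Real.log_nonpos hδ.1.le hδ.2.le))

theorem HasBoxDim2.nonneg {A : Set (ℝ × ℝ)} {D : ℝ} (h : HasBoxDim2 A D) : 0 ≤ D :=
  ge_of_tendsto h (eventually_nonneg_log_div_neg_log _)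

theorem HasBoxDim2.eventually_meshCount2_le_rpow {A : Set (ℝ × ℝ)} {D t : ℝ}
    (h : HasBoxDim2 A D) (ht : D < t) : ∀ᶠ δ in 𝓝[>] 0, (meshCount2 δ A : ℝ) ≤ δ ^ (-t) := by
  filter_upwards [h.eventually_le_const ht, Ioo_mem_nhdsGT one_pos] with δ hdim hδ
  rcases (meshCount2 δ A).eq_zero_or_pos with h0 | hpos
  · rw [h0, Nat.cast_zero]; exact (Real.rpow_pos_of_pos hδ.1 _).le
  rw [div_le_iff₀ (neg_pos.2 (Real.log_neg hδ.1 hδ.2))] at hdim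
  rw [Real.le_rpow_iff_log_le (by exact_mod_cast hpos) hδ.1]
  linarith

theorem limsup_log_div_neg_log_le {u : ℝ → ℕ} {s : ℝ} (hs : 0 ≤ s)
    (h : ∀ ε > 0, ∃ C, ∀ᶠ δ in 𝓝[>] 0, (u δ : ℝ) ≤ C * δ ^ (-(s + ε))) :
    limsup (fun δ => Real.log (u δ) / (-Real.log δ)) (𝓝[>] 0) ≤ s := by
  refine le_of_forall_pos_le_add fun ε hε => limsup_le_of_le
    (isCoboundedUnder_le_of_eventually_le _ (eventually_nonneg_log_div_neg_log u)) ?_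
  obtain ⟨C, hC⟩ := h (ε / 2) (half_pos hε)
  have htop : Tendsto (fun δ => -Real.log δ) (𝓝[>] 0) atTop :=
    tendsto_neg_atBot_atTop.comp Real.tendsto_log_nhdsGT_zero
  filter_upwards [hC, Ioo_mem_nhdsGT one_pos,
    htop.eventually_ge_atTop (Real.log C / (ε / 2))] with δ hu hδ hlogC
  have hL : 0 < -Real.log δ := neg_pos.2 (Real.log_neg hδ.1 hδ.2)
  rw [div_le_iff₀ (half_pos hε)] at hlogC
  rw [div_le_iff₀ hL]
  rcases (u δ).eq_zero_or_pos with h0 | hpos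
  · rw [h0, Nat.cast_zero, Real.log_zero]; positivity
  have hu₀ : (0 : ℝ) < u δ := by exact_mod_cast hpos
  have hrpow : 0 < δ ^ (-(s + ε / 2)) := Real.rpow_pos_of_pos hδ.1 _
  have hC₀ : 0 < C := pos_of_mul_pos_left (hu₀.trans_le hu) hrpow.le
  calc Real.log (u δ) ≤ Real.log (C * δ ^ (-(s + ε / 2))) := Real.log_le_log hu₀ hu
    _ = Real.log C + (s + ε / 2) * -Real.log δ := by
        rw [Real.log_mul hC₀.ne' hrpow.ne', Real.log_rpow hδ.1]; ring
    _ ≤ (s + ε) * -Real.log δ := by linarith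

theorem stmt16_general (N M : ℕ) (hN : 0 < N)
    (f : Fin N → ℝ → ℝ) (g : Fin M → ℝ → ℝ)
    (lam : Fin N → ℝ × ℝ → ℝ) (mu : Fin M → ℝ × ℝ → ℝ)
    (hf : ∀ i, ContinuousOn (f i) (Icc 0 1)) (hg : ∀ j, ContinuousOn (g j) (Icc 0 1))
    (hliplam : ∀ i, ∃ K : NNReal, LipschitzOnWith K (lam i) (Icc 0 1 ×ˢ Icc 0 1))
    (hlipmu : ∀ j, ∃ K : NNReal, LipschitzOnWith K (mu j) (Icc 0 1 ×ˢ Icc 0 1))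
    (Df : Fin N → ℝ) (Dg : Fin M → ℝ)
    (hDf : ∀ i, HasBoxDim2 (Gr1 (f i)) (Df i))
    (hDg : ∀ j, HasBoxDim2 (Gr1 (g j)) (Dg j)) :
    limsup (fun δ : ℝ =>
        Real.log (meshCount3 δ
          (Gr2 fun x y => (∑ i, lam i (x, y) * f i x) + ∑ j, mu j (x, y) * g j y)) /
          (-Real.log δ))
      (𝓝[>] 0) ≤ 1 + max (⨆ i, Df i) (⨆ j, Dg j) := by
  have : Nonempty (Fin N) := ⟨⟨0, hN⟩⟩
  obtain ⟨K, hK⟩ := exists_meshCount3_weightedSum_le hf hg hliplam hlipmu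
  set D := max (⨆ i, Df i) (⨆ j, Dg j)
  have hDf_le i : Df i ≤ D := (le_ciSup (Finite.bddAbove_range Df) i).trans (le_max_left _ _)
  have hDg_le j : Dg j ≤ D := (le_ciSup (Finite.bddAbove_range Dg) j).trans (le_max_right _ _)
  have hD : 0 ≤ D := (hDf ⟨0, hN⟩).nonneg.trans (hDf_le _)
  refine limsup_log_div_neg_log_le (by linarith) fun ε hε => ⟨K, ?_⟩
  filter_upwards [Ioo_mem_nhdsGT one_pos,
    eventually_all.2 fun i => (hDf i).eventually_meshCount2_le_rpow (t := D + ε)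
      (by linarith [hDf_le i]),
    eventually_all.2 fun j => (hDg j).eventually_meshCount2_le_rpow (t := D + ε)
      (by linarith [hDg_le j])] with δ hδ hfδ hgδ
  calc _ ≤ K / δ * δ ^ (-(D + ε)) := hK δ hδ _ hfδ hgδ
    _ = K * δ ^ (-(1 + D + ε)) := by
        rw [show -(1 + D + ε) = -1 + -(D + ε) by ring, Real.rpow_add hδ.1, Real.rpow_neg_one]
        ring

/-- **Theorem 4 (upper bound for sums).** For continuous `f_i, g_j : [0,1] → ℝ` with
box-counting dimensional graphs and bivariate Lipschitz `λ_i, μ_j : [0,1]² → ℝ`, the upper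
box-counting dimension of the graph of
`F(x,y) = Σ λ_i(x,y)f_i(x) + Σ μ_j(x,y)g_j(y)` is at most
`1 + max_{i,j}{dim_B Gr(f_i), dim_B Gr(g_j)}`. -/
theorem stmt16 (N M : ℕ) (hN : 0 < N) (hM : 0 < M)
    (f : Fin N → ℝ → ℝ) (g : Fin M → ℝ → ℝ)
    (lam : Fin N → ℝ × ℝ → ℝ) (mu : Fin M → ℝ × ℝ → ℝ)
    (hf : ∀ i, ContinuousOn (f i) (Icc 0 1)) (hg : ∀ j, ContinuousOn (g j) (Icc 0 1))
    (hliplam : ∀ i, ∃ K : NNReal, LipschitzOnWith K (lam i) (Icc 0 1 ×ˢ Icc 0 1))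
    (hlipmu : ∀ j, ∃ K : NNReal, LipschitzOnWith K (mu j) (Icc 0 1 ×ˢ Icc 0 1))
    (Df : Fin N → ℝ) (Dg : Fin M → ℝ)
    (hDf : ∀ i, HasBoxDim2 (Gr1 (f i)) (Df i))
    (hDg : ∀ j, HasBoxDim2 (Gr1 (g j)) (Dg j)) :
    limsup (fun δ : ℝ =>
        Real.log (meshCount3 δ
          (Gr2 fun x y => (∑ i, lam i (x, y) * f i x) + ∑ j, mu j (x, y) * g j y)) /
          (-Real.log δ))
      (𝓝[>] 0) ≤ 1 + max (⨆ i, Df i) (⨆ j, Dg j) :=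
  stmt16_general N M hN f g lam mu hf hg hliplam hlipmu Df Dg hDf hDg
end
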